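/- arXiv:1910.13005 — 4 statements merged into one kernel-verified Lean document; each statement's English description precedes it below -/
import Mathlib

section
/- Let G be an ample Hausdorff groupoid and let σ : G^(2) → R^× be a continuous (normalised) 2-cocycle. Then the twisted Steinberg algebra A_R(G,σ) is an associative R-algebra under the twisted convolution product (f *_σ g)(γ) = Σ_{(α,β)∈G^(2), αβ=γ} σ(α,β) f(α) g(β). If moreover R has a T-inverse involution r ↦ r̄ for some subgroup T ≤ R^× and σ is T-valued, then f*(γ) := σ(γ,γ^{-1})^{-1} · conj(f(γ^{-1})) defines an involution making A_R(G,σ) a *-algebra over R (in particular (f *_σ g)* = g* *_σ f* and (f*)* = f). -/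
/-!
Common definitions: topological groupoids, bisections, étale/ample groupoids,
continuous `Rˣ`-valued 2-cocycles, and twisted Steinberg algebras.

A groupoid is modelled as a type `G` together with a composability predicate
`comp`, a (partial, junk-valued off composable pairs) multiplication `mul`,
and an inversion `inv`.  The range and source maps are `r γ = γ γ⁻¹` and
`s γ = γ⁻¹ γ`, and the unit space is the set of fixed points of `r`.
-/

namespace TwistedSteinberg

structure GroupoidStruct (G : Type*) where
  comp : G → G → Prop
  mul : G → G → G
  inv : G → G

namespace GroupoidStruct

variable {G : Type*}

/-- The range map `r γ = γ γ⁻¹`. -/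
def r (T : GroupoidStruct G) (γ : G) : G := T.mul γ (T.inv γ)

/-- The source map `s γ = γ⁻¹ γ`. -/
def s (T : GroupoidStruct G) (γ : G) : G := T.mul (T.inv γ) γ

/-- The unit space `G⁰`. -/
def unitSpace (T : GroupoidStruct G) : Set G := {x | T.r x = x}

/-- The axioms making `(comp, mul, inv)` a groupoid. -/
structure IsGroupoid (T : GroupoidStruct G) : Prop where
  comp_iff : ∀ a b, T.comp a b ↔ T.s a = T.r b
  assoc : ∀ a b c, T.comp a b → T.comp b c →
    T.mul (T.mul a b) c = T.mul a (T.mul b c)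
  inv_inv : ∀ a, T.inv (T.inv a) = a
  r_mul : ∀ a b, T.comp a b → T.r (T.mul a b) = T.r a
  s_mul : ∀ a b, T.comp a b → T.s (T.mul a b) = T.s b
  r_inv : ∀ a, T.r (T.inv a) = T.s a
  s_inv : ∀ a, T.s (T.inv a) = T.r a
  r_mul_self : ∀ a, T.mul (T.r a) a = a
  mul_s_self : ∀ a, T.mul a (T.s a) = a
  r_unit : ∀ a, T.r a ∈ T.unitSpace
  s_unit : ∀ a, T.s a ∈ T.unitSpace

/-- A topological groupoid: inversion is continuous and multiplication is
continuous on the set of composable pairs. -/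
structure IsTopGroupoid [TopologicalSpace G] (T : GroupoidStruct G)
    extends IsGroupoid T : Prop where
  continuous_inv : Continuous T.inv
  continuousOn_mul : ContinuousOn (fun p : G × G => T.mul p.1 p.2)
    {p : G × G | T.comp p.1 p.2}

/-- `B` is a bisection if it is contained in an open set `U` on which both `r`
and `s` restrict to homeomorphisms onto open subsets. -/
def IsBisection [TopologicalSpace G] (T : GroupoidStruct G) (B : Set G) : Prop :=
  ∃ U : Set G, B ⊆ U ∧ IsOpen U ∧ Set.InjOn T.r U ∧ Set.InjOn T.s U ∧
    ∀ V : Set G, V ⊆ U → IsOpen V → IsOpen (T.r '' V) ∧ IsOpen (T.s '' V)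

/-- A groupoid is étale if its range map is a local homeomorphism. -/
def IsEtale [TopologicalSpace G] (T : GroupoidStruct G) : Prop :=
  IsLocalHomeomorph T.r

/-- A groupoid is ample if it has a basis of compact open bisections. -/
def IsAmple [TopologicalSpace G] (T : GroupoidStruct G) : Prop :=
  TopologicalSpace.IsTopologicalBasis
    {B : Set G | IsCompact B ∧ IsOpen B ∧ T.IsBisection B}

/-- The product `BD` of two subsets of a groupoid. -/
def setMul (T : GroupoidStruct G) (B D : Set G) : Set G :=
  {x | ∃ a ∈ B, ∃ b ∈ D, T.comp a b ∧ T.mul a b = x}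

end GroupoidStruct

open GroupoidStruct

section Cocycle

variable {G R : Type*} [TopologicalSpace G] [CommRing R] [TopologicalSpace R]

/-- A continuous normalised `Rˣ`-valued 2-cocycle on the groupoid `T`. -/
structure IsCocycle (T : GroupoidStruct G) (σ : G → G → Rˣ) : Prop where
  continuousOn : ContinuousOn (fun p : G × G => ((σ p.1 p.2 : Rˣ) : R))
    {p : G × G | T.comp p.1 p.2}
  cocycle : ∀ a b c, T.comp a b → T.comp b c →
    σ a b * σ (T.mul a b) c = σ a (T.mul b c) * σ b c
  norm_left : ∀ γ : G, σ (T.r γ) γ = 1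
  norm_right : ∀ γ : G, σ γ (T.s γ) = 1

/-- The underlying `R`-module of the (twisted) Steinberg algebra: locally
constant compactly supported functions `G → R`. -/
def steinbergCarrier (G R : Type*) [TopologicalSpace G] [Zero R] : Set (G → R) :=
  {f | IsLocallyConstant f ∧ IsCompact (Function.support f)}

/-- The twisted convolution product
`(f *σ g)(γ) = ∑_{αβ = γ} σ(α,β) f(α) g(β)`. -/
noncomputable def conv (T : GroupoidStruct G) (σ : G → G → Rˣ)
    (f g : G → R) (γ : G) : R :=
  ∑ᶠ (p : G × G) (_ : T.comp p.1 p.2 ∧ T.mul p.1 p.2 = γ),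
    ((σ p.1 p.2 : Rˣ) : R) * f p.1 * g p.2

/-- A `T`-inverse involution on `R`: a ring involution restricting to
inversion on the subgroup `Tsub ≤ Rˣ`. -/
def IsTInverseInvolution (Tsub : Subgroup Rˣ) (c : R → R) : Prop :=
  c 1 = 1 ∧ (∀ x y, c (x + y) = c x + c y) ∧ (∀ x y, c (x * y) = c x * c y) ∧
    (∀ x, c (c x) = x) ∧ ∀ z : Rˣ, z ∈ Tsub → c ((z : Rˣ) : R) = ((z⁻¹ : Rˣ) : R)

/-- The twisted involution `f*(γ) = σ(γ,γ⁻¹)⁻¹ ⬝ c (f (γ⁻¹))`. -/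
noncomputable def convStar (T : GroupoidStruct G) (σ : G → G → Rˣ) (c : R → R)
    (f : G → R) (γ : G) : R :=
  (((σ γ (T.inv γ))⁻¹ : Rˣ) : R) * c (f (T.inv γ))

end Cocycle
section Twist

/-!
Discrete twists `G⁰ × T → Σ → G` over a Hausdorff étale groupoid `G`,
where `T = Tsub` is a subgroup of the units `Rˣ` of a discrete commutative
unital ring `R`.  The inclusion is modelled as a map `i : G → Tsub → Σ`
(only its values `i x z` for `x ∈ G⁰` are relevant).
-/

variable {G S R : Type*} [TopologicalSpace G] [TopologicalSpace S]
  [CommRing R] [TopologicalSpace R]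

/-- A discrete twist `(Σ, i, q)` by `Tsub ≤ Rˣ` over `G`. -/
structure IsDiscreteTwist (TG : GroupoidStruct G) (TS : GroupoidStruct S)
    (Tsub : Subgroup Rˣ) (i : G → Tsub → S) (q : S → G) : Prop where
  topS : TS.IsTopGroupoid
  t2S : T2Space S
  locallyCompactS : LocallyCompactSpace S
  unit_eq : TS.unitSpace = (fun x => i x 1) '' TG.unitSpace
  i_continuousOn : ContinuousOn (fun p : G × Tsub => i p.1 p.2)
    (TG.unitSpace ×ˢ (Set.univ : Set Tsub))
  i_injective : ∀ x ∈ TG.unitSpace, ∀ x' ∈ TG.unitSpace, ∀ z z' : Tsub,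
    i x z = i x' z' → x = x' ∧ z = z'
  i_comp : ∀ x ∈ TG.unitSpace, ∀ z w : Tsub, TS.comp (i x z) (i x w)
  i_mul : ∀ x ∈ TG.unitSpace, ∀ z w : Tsub, TS.mul (i x z) (i x w) = i x (z * w)
  i_inv : ∀ x ∈ TG.unitSpace, ∀ z : Tsub, TS.inv (i x z) = i x z⁻¹
  q_continuous : Continuous q
  q_surjective : Function.Surjective q
  q_quotient : ∀ V : Set G, IsOpen V ↔ IsOpen (q ⁻¹' V)
  q_comp : ∀ ε δ, TS.comp ε δ → TG.comp (q ε) (q δ)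
  q_mul : ∀ ε δ, TS.comp ε δ → q (TS.mul ε δ) = TG.mul (q ε) (q δ)
  q_inv : ∀ ε, q (TS.inv ε) = TG.inv (q ε)
  q_i : ∀ x ∈ TG.unitSpace, ∀ z : Tsub, q (i x z) = x
  i_q_unit : ∀ ε ∈ TS.unitSpace, i (q ε) 1 = ε
  q_unit_mem : ∀ ε ∈ TS.unitSpace, q ε ∈ TG.unitSpace
  exact_fibre : ∀ x ∈ TG.unitSpace, ∀ ε, q ε = x ↔ ∃ z : Tsub, ε = i x z
  central_comp_left : ∀ (ε : S) (z : Tsub), TS.comp (i (TG.r (q ε)) z) ε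
  central_comp_right : ∀ (ε : S) (z : Tsub), TS.comp ε (i (TG.s (q ε)) z)
  central : ∀ (ε : S) (z : Tsub),
    TS.mul (i (TG.r (q ε)) z) ε = TS.mul ε (i (TG.s (q ε)) z)
  locally_trivial : ∀ α : G, ∃ B : Set G, α ∈ B ∧ IsOpen B ∧ TG.IsBisection B ∧
    ∃ P : G → S, ContinuousOn P B ∧ (∀ β ∈ B, q (P β) = β) ∧
      Set.BijOn (fun p : G × Tsub => TS.mul (i (TG.r p.1) p.2) (P p.1))
        (B ×ˢ (Set.univ : Set Tsub)) (q ⁻¹' B) ∧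
      ContinuousOn (fun p : G × Tsub => TS.mul (i (TG.r p.1) p.2) (P p.1))
        (B ×ˢ (Set.univ : Set Tsub)) ∧
      ∀ V ⊆ B ×ˢ (Set.univ : Set Tsub), IsOpen V →
        IsOpen ((fun p : G × Tsub => TS.mul (i (TG.r p.1) p.2) (P p.1)) '' V)

/-- The action `z ⬝ ε = i(r(ε), z) ε` of `Tsub` on the twist `Σ`. -/
def twistAct (TG : GroupoidStruct G) (TS : GroupoidStruct S)
    {Tsub : Subgroup Rˣ} (i : G → Tsub → S) (q : S → G) (z : Tsub) (ε : S) : S :=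
  TS.mul (i (TG.r (q ε)) z) ε

/-- A continuous global section `P : G → Σ` of the twist. -/
def IsGlobalSection (TG : GroupoidStruct G) (TS : GroupoidStruct S)
    (q : S → G) (P : G → S) : Prop :=
  Continuous P ∧ (∀ γ, q (P γ) = γ) ∧ ∀ x ∈ TG.unitSpace, P x ∈ TS.unitSpace

/-- The 2-cocycle `σ` is induced by the section `P`, i.e.
`P(α) P(β) P(αβ)⁻¹ = i(r(α), σ(α,β))` for composable `(α,β)`. -/
def InducesCocycle (TG : GroupoidStruct G) (TS : GroupoidStruct S)
    {Tsub : Subgroup Rˣ} (i : G → Tsub → S) (P : G → S) (σ : G → G → Tsub) : Prop :=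
  ∀ α β, TG.comp α β →
    TS.mul (TS.mul (P α) (P β)) (TS.inv (P (TG.mul α β))) = i (TG.r α) (σ α β)

/-- A continuous normalised 2-cocycle with values in the subgroup `Tsub ≤ Rˣ`. -/
structure IsCocycleSub (TG : GroupoidStruct G) (Tsub : Subgroup Rˣ)
    (σ : G → G → Tsub) : Prop where
  continuousOn : ContinuousOn (fun p : G × G => (((σ p.1 p.2 : Rˣ)) : R))
    {p : G × G | TG.comp p.1 p.2}
  cocycle : ∀ a b c, TG.comp a b → TG.comp b c →
    σ a b * σ (TG.mul a b) c = σ a (TG.mul b c) * σ b c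
  norm_left : ∀ γ : G, σ (TG.r γ) γ = 1
  norm_right : ∀ γ : G, σ γ (TG.s γ) = 1

/-- `σ` and `τ` are cohomologous via the continuous function `b : G → Tsub`. -/
def CohomologousVia (TG : GroupoidStruct G) {Tsub : Subgroup Rˣ}
    (σ τ : G → G → Tsub) (b : G → Tsub) : Prop :=
  Continuous (fun γ : G => ((b γ : Rˣ) : R)) ∧ (∀ x ∈ TG.unitSpace, b x = 1) ∧
    ∀ α β, TG.comp α β → σ α β * (τ α β)⁻¹ = b α * b β * (b (TG.mul α β))⁻¹

/-- The twisted groupoid `G ×_σ T`. -/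
def prodTwist (TG : GroupoidStruct G) (Tsub : Subgroup Rˣ) (σ : G → G → Tsub) :
    GroupoidStruct (G × Tsub) where
  comp p p' := TG.comp p.1 p'.1
  mul p p' := (TG.mul p.1 p'.1, σ p.1 p'.1 * p.2 * p'.2)
  inv p := (TG.inv p.1, (σ p.1 (TG.inv p.1))⁻¹ * p.2⁻¹)

/-- The inclusion `i_σ : G⁰ × T → G ×_σ T`. -/
def prodTwistI (Tsub : Subgroup Rˣ) : G → Tsub → G × Tsub := fun x z => (x, z)

/-- The projection `q_σ : G ×_σ T → G`. -/
def prodTwistQ (Tsub : Subgroup Rˣ) : G × Tsub → G := fun p => p.1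

/-- An isomorphism of discrete twists: a homeomorphism and groupoid
isomorphism intertwining the inclusions and projections. -/
def IsTwistIso {S1 S2 : Type*} [TopologicalSpace S1] [TopologicalSpace S2]
    (TG : GroupoidStruct G) (T1 : GroupoidStruct S1) (T2 : GroupoidStruct S2)
    {Tsub : Subgroup Rˣ} (i1 : G → Tsub → S1) (q1 : S1 → G)
    (i2 : G → Tsub → S2) (q2 : S2 → G) (ψ : S1 → S2) : Prop :=
  Function.Bijective ψ ∧ Continuous ψ ∧ (∀ V : Set S1, IsOpen V → IsOpen (ψ '' V)) ∧
    (∀ δ ε, T1.comp δ ε → T2.comp (ψ δ) (ψ ε) ∧ ψ (T1.mul δ ε) = T2.mul (ψ δ) (ψ ε)) ∧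
    (∀ x ∈ TG.unitSpace, ∀ z : Tsub, ψ (i1 x z) = i2 x z) ∧
    ∀ ε, q2 (ψ ε) = q1 ε

/-- The carrier of the twisted Steinberg algebra `A_R(G; Σ)`: continuous
`Tsub`-equivariant functions `f : Σ → R` such that `q(supp f)` has compact
closure. -/
def twistCarrier (TG : GroupoidStruct G) (TS : GroupoidStruct S)
    {Tsub : Subgroup Rˣ} (i : G → Tsub → S) (q : S → G) : Set (S → R) :=
  {f | Continuous f ∧
    (∀ (z : Tsub) (ε : S), f (TS.mul (i (TG.r (q ε)) z) ε) = ((z : Rˣ) : R) * f ε) ∧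
    IsCompact (closure (q '' Function.support f))}

/-- The convolution `(f *_Σ g)(ε) = ∑_{γ ∈ G^{s(q(ε))}} f(ε P(γ)) g(P(γ)⁻¹)`. -/
noncomputable def twistConv (TG : GroupoidStruct G) (TS : GroupoidStruct S)
    (q : S → G) (P : G → S) (f g : S → R) (ε : S) : R :=
  ∑ᶠ (γ : G) (_ : TG.r γ = TG.s (q ε)), f (TS.mul ε (P γ)) * g (TS.inv (P γ))

/-- The involution `f*(ε) = c (f (ε⁻¹))` on `A_R(G; Σ)`. -/
def twistStar (TS : GroupoidStruct S) (c : R → R) (f : S → R) (ε : S) : R :=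
  c (f (TS.inv ε))

end Twist

end TwistedSteinberg

/-!
The convolution `(f *σ g)(γ)` is a finite sum: `σ(α, α⁻¹γ) f(α) g(α⁻¹γ)` summed over
the `α` with `r(α) = r(γ)`, a set meeting the compact support of `f` in finitely many
points because `r` is injective on each compact open bisection. Reindexing these fibre sums
reduces associativity to the cocycle identity at `(α, α⁻¹β, β⁻¹γ)`, and the
anti-multiplicativity of `*` to the substitution `(α, β) ↦ (β⁻¹, α⁻¹)` together with the
identity `σ(α,β) σ(αβ,(αβ)⁻¹) σ(β⁻¹,α⁻¹) = σ(α,α⁻¹) σ(β,β⁻¹)`.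
For local constancy of `f *σ g`, biadditivity reduces `f` to the indicator of a compact open
bisection `B` (these span `A_R(G)` additively); then `(f *σ g)(γ)` involves only the unique
`α ∈ B` with `r(α) = r(γ)`, which depends continuously on `γ`.
-/

open Function Set Filter Topology

theorem IsCompact.finite_inter_preimage_singleton {X Y : Type*} [TopologicalSpace X]
    {K : Set X} (hK : IsCompact K) {φ : X → Y} (hφ : ∀ x ∈ K, ∃ U ∈ 𝓝 x, InjOn φ U)
    (y : Y) : (K ∩ φ ⁻¹' {y}).Finite := by
  choose! U hU hinj using hφ
  obtain ⟨t, htK, hKt⟩ := hK.elim_nhds_subcover U hU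
  refine (t.finite_toSet.biUnion (t := fun x => U x ∩ φ ⁻¹' {y}) fun x hx => ?_).subset
    fun z hz => ?_
  · exact Subsingleton.finite fun a ha b hb =>
      hinj x (htK x hx) ha.1 hb.1 (ha.2.trans hb.2.symm)
  · obtain ⟨x, hx, hzx⟩ := mem_iUnion₂.1 (hKt hz.1)
    exact mem_iUnion₂.2 ⟨x, hx, hzx, hz.2⟩

theorem continuousOn_invFunOn_image {X Y : Type*} [TopologicalSpace X] [TopologicalSpace Y]
    [Nonempty X] {φ : X → Y} {U : Set X} (hU : IsOpen U) (hinj : InjOn φ U)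
    (hopen : ∀ V ⊆ U, IsOpen V → IsOpen (φ '' V)) :
    ContinuousOn (invFunOn φ U) (φ '' U) := by
  rw [continuousOn_open_iff (hopen U subset_rfl hU)]
  intro W hW
  convert hopen (U ∩ W) inter_subset_left (hU.inter hW) using 1
  ext y
  constructor
  · rintro ⟨⟨x, hx, rfl⟩, hxW⟩
    exact ⟨x, ⟨hx, by rwa [mem_preimage, hinj.leftInvOn_invFunOn hx] at hxW⟩, rfl⟩
  · rintro ⟨x, ⟨hx, hxW⟩, rfl⟩
    exact ⟨⟨x, hx, rfl⟩, by rwa [mem_preimage, hinj.leftInvOn_invFunOn hx]⟩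

theorem IsLocallyConstant.isClopen_support {X Y : Type*} [TopologicalSpace X] [Zero Y]
    {f : X → Y} (hf : IsLocallyConstant f) : IsClopen (support f) := by
  rw [support_eq_preimage, preimage_compl]
  exact ⟨isClosed_compl_iff.2 (hf {0}), (hf.isClosed_fiber 0).isOpen_compl⟩

theorem mul_finsum_mem_of_finite_inter_support {α R : Type*} [NonUnitalNonAssocSemiring R]
    {s : Set α} {f : α → R} (r : R) (h : (s ∩ support f).Finite) :
    r * ∑ᶠ i ∈ s, f i = ∑ᶠ i ∈ s, r * f i :=
  (AddMonoidHom.mulLeft r).map_finsum_mem' h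

namespace TwistedSteinberg

namespace GroupoidStruct

variable {G : Type*} {T : GroupoidStruct G}

def mulFiber (T : GroupoidStruct G) (γ : G) : Set (G × G) :=
  {p | T.comp p.1 p.2 ∧ T.mul p.1 p.2 = γ}

namespace IsGroupoid

lemma comp_inv_self (hG : T.IsGroupoid) (a : G) : T.comp a (T.inv a) :=
  (hG.comp_iff _ _).2 (hG.r_inv a).symm

lemma inv_comp_self (hG : T.IsGroupoid) (a : G) : T.comp (T.inv a) a :=
  (hG.comp_iff _ _).2 (hG.s_inv a)

lemma inv_comp_of_r_eq (hG : T.IsGroupoid) {a b : G} (h : T.r a = T.r b) :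
    T.comp (T.inv a) b := by
  rw [hG.comp_iff, hG.s_inv, h]

lemma comp_inv_mul (hG : T.IsGroupoid) {a b : G} (h : T.r a = T.r b) :
    T.comp a (T.mul (T.inv a) b) := by
  rw [hG.comp_iff, hG.r_mul _ _ (hG.inv_comp_of_r_eq h), hG.r_inv]

lemma comp_inv_inv (hG : T.IsGroupoid) {a b : G} (h : T.comp a b) :
    T.comp (T.inv b) (T.inv a) := by
  rw [hG.comp_iff, hG.s_inv, hG.r_inv, (hG.comp_iff a b).1 h]

lemma mul_inv_cancel_left (hG : T.IsGroupoid) {a b : G} (h : T.r a = T.r b) :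
    T.mul a (T.mul (T.inv a) b) = b := by
  rw [← hG.assoc _ _ _ (hG.comp_inv_self a) (hG.inv_comp_of_r_eq h)]
  change T.mul (T.r a) b = b
  rw [h, hG.r_mul_self]

lemma inv_mul_cancel_left (hG : T.IsGroupoid) {a b : G} (h : T.comp a b) :
    T.mul (T.inv a) (T.mul a b) = b := by
  rw [← hG.assoc _ _ _ (hG.inv_comp_self a) h]
  change T.mul (T.s a) b = b
  rw [(hG.comp_iff a b).1 h, hG.r_mul_self]

lemma comp_inv_mul_inv_mul (hG : T.IsGroupoid) {a b c : G} (hab : T.r a = T.r b)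
    (hbc : T.r b = T.r c) : T.comp (T.mul (T.inv a) b) (T.mul (T.inv b) c) := by
  rw [hG.comp_iff, hG.s_mul _ _ (hG.inv_comp_of_r_eq hab),
    hG.r_mul _ _ (hG.inv_comp_of_r_eq hbc), hG.r_inv]

lemma inv_mul_mul_inv_mul (hG : T.IsGroupoid) {a b c : G} (hab : T.r a = T.r b)
    (hbc : T.r b = T.r c) :
    T.mul (T.mul (T.inv a) b) (T.mul (T.inv b) c) = T.mul (T.inv a) c := by
  rw [hG.assoc _ _ _ (hG.inv_comp_of_r_eq hab) (hG.comp_inv_mul hbc),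
    hG.mul_inv_cancel_left hbc]

lemma inv_mul (hG : T.IsGroupoid) {a b : G} (h : T.comp a b) :
    T.inv (T.mul a b) = T.mul (T.inv b) (T.inv a) := by
  have hb : T.r b = T.r (T.inv a) := by rw [hG.r_inv, (hG.comp_iff a b).1 h]
  have hc : T.comp (T.mul a b) (T.mul (T.inv b) (T.inv a)) := by
    rw [hG.comp_iff, hG.s_mul _ _ h, hG.r_mul _ _ (hG.inv_comp_of_r_eq hb), hG.r_inv]
  have key : T.mul (T.mul a b) (T.mul (T.inv b) (T.inv a)) = T.s (T.inv (T.mul a b)) := by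
    rw [hG.assoc _ _ _ h (hG.comp_inv_mul hb), hG.mul_inv_cancel_left hb, hG.s_inv,
      hG.r_mul _ _ h]
    rfl
  rw [← hG.inv_mul_cancel_left hc, key, hG.mul_s_self]

lemma inv_r (hG : T.IsGroupoid) (a : G) : T.inv (T.r a) = T.r a := by
  change T.inv (T.mul a (T.inv a)) = T.mul a (T.inv a)
  rw [hG.inv_mul (hG.comp_inv_self a), hG.inv_inv]

lemma mapsTo_swap_inv_mulFiber (hG : T.IsGroupoid) (γ : G) :
    MapsTo (fun p : G × G => (T.inv p.2, T.inv p.1)) (T.mulFiber γ) (T.mulFiber (T.inv γ)) :=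
  fun p ⟨hc, hm⟩ => ⟨hG.comp_inv_inv hc, by rw [← hG.inv_mul hc, hm]⟩

end IsGroupoid

variable [TopologicalSpace G]

lemma IsTopGroupoid.continuous_r (hT : T.IsTopGroupoid) : Continuous T.r :=
  hT.continuousOn_mul.comp_continuous (continuous_id.prodMk hT.continuous_inv)
    hT.comp_inv_self

lemma IsTopGroupoid.isClosed_comp [T2Space G] (hT : T.IsTopGroupoid) :
    IsClosed {p : G × G | T.comp p.1 p.2} := by
  have hs : Continuous T.s := hT.continuousOn_mul.comp_continuous
    (hT.continuous_inv.prodMk continuous_id) hT.inv_comp_self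
  simp only [hT.comp_iff]
  exact isClosed_eq (hs.comp continuous_fst) (hT.continuous_r.comp continuous_snd)

lemma IsTopGroupoid.isCompact_setMul [T2Space G] (hT : T.IsTopGroupoid) {K L : Set G}
    (hK : IsCompact K) (hL : IsCompact L) :
    IsCompact (T.setMul K L) := by
  have : T.setMul K L =
      (fun p : G × G => T.mul p.1 p.2) '' (K ×ˢ L ∩ {p | T.comp p.1 p.2}) := by
    ext x
    simp only [setMul, mem_image, mem_inter_iff, mem_prod, mem_ofPred_eq, Prod.exists]
    grind
  rw [this]
  exact ((hK.prod hL).inter_right hT.isClosed_comp).image_of_continuousOn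
    (hT.continuousOn_mul.mono inter_subset_right)

lemma IsBisection.mono {B C : Set G} (hB : T.IsBisection B) (hCB : C ⊆ B) :
    T.IsBisection C :=
  let ⟨U, hBU, hU⟩ := hB
  ⟨U, hCB.trans hBU, hU⟩

lemma IsAmple.exists_mem_nhds_injOn (hample : T.IsAmple) (γ : G) :
    ∃ U ∈ 𝓝 γ, InjOn T.r U ∧ InjOn T.s U := by
  obtain ⟨B, ⟨-, hBo, U, hBU, -, hr, hs, -⟩, hγB, -⟩ :=
    hample.exists_subset_of_mem_open (mem_univ γ) isOpen_univ
  exact ⟨B, hBo.mem_nhds hγB, hr.mono hBU, hs.mono hBU⟩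

lemma IsAmple.finite_inter_r_preimage (hample : T.IsAmple) {K : Set G} (hK : IsCompact K)
    (x : G) : (K ∩ T.r ⁻¹' {x}).Finite :=
  hK.finite_inter_preimage_singleton
    (fun γ _ => (hample.exists_mem_nhds_injOn γ).imp fun _ h => ⟨h.1, h.2.1⟩) x

lemma IsAmple.finite_inter_s_preimage (hample : T.IsAmple) {K : Set G} (hK : IsCompact K)
    (x : G) : (K ∩ T.s ⁻¹' {x}).Finite :=
  hK.finite_inter_preimage_singleton
    (fun γ _ => (hample.exists_mem_nhds_injOn γ).imp fun _ h => ⟨h.1, h.2.2⟩) x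

end GroupoidStruct

open GroupoidStruct

section Cocycle

variable {G R : Type*} [TopologicalSpace G] [CommRing R] [TopologicalSpace R]
  {T : GroupoidStruct G} {σ : G → G → Rˣ}

lemma IsCocycle.cocycle_inv_mul (hG : T.IsGroupoid) (hσ : IsCocycle (R := R) T σ) {α β γ : G}
    (hαβ : T.r α = T.r β) (hβγ : T.r β = T.r γ) :
    σ α (T.mul (T.inv α) β) * σ β (T.mul (T.inv β) γ) =
      σ α (T.mul (T.inv α) γ) * σ (T.mul (T.inv α) β) (T.mul (T.inv β) γ) := by
  have h := hσ.cocycle α (T.mul (T.inv α) β) (T.mul (T.inv β) γ) (hG.comp_inv_mul hαβ)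
    (hG.comp_inv_mul_inv_mul hαβ hβγ)
  rwa [hG.mul_inv_cancel_left hαβ, hG.inv_mul_mul_inv_mul hαβ hβγ] at h

lemma IsCocycle.apply_inv_comm (hG : T.IsGroupoid) (hσ : IsCocycle (R := R) T σ) (γ : G) :
    σ γ (T.inv γ) = σ (T.inv γ) γ := by
  have h := hσ.cocycle γ (T.inv γ) γ (hG.comp_inv_self γ) (hG.inv_comp_self γ)
  change σ γ (T.inv γ) * σ (T.r γ) γ = σ γ (T.s γ) * σ (T.inv γ) γ at h
  rwa [hσ.norm_left, hσ.norm_right, mul_one, one_mul] at h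

lemma IsCocycle.apply_inv_inv (hG : T.IsGroupoid) (hσ : IsCocycle (R := R) T σ) {α β : G}
    (h : T.comp α β) :
    σ (T.inv β) (T.inv α) = σ α (T.inv α) * σ β (T.inv β) *
      (σ α β * σ (T.mul α β) (T.inv (T.mul α β)))⁻¹ := by
  have hinv := hG.inv_mul h
  have hβα : T.r β = T.r (T.inv α) := by rw [hG.r_inv, (hG.comp_iff α β).1 h]
  have hβ : T.comp β (T.inv (T.mul α β)) := by
    rw [hG.comp_iff, hG.r_inv, hG.s_mul _ _ h]
  have e1 := hσ.cocycle α β _ h hβ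
  rw [hinv, hG.mul_inv_cancel_left hβα, ← hinv] at e1
  have e2 := hσ.cocycle β (T.inv β) (T.inv α) (hG.comp_inv_self β) (hG.comp_inv_inv h)
  change σ β (T.inv β) * σ (T.r β) (T.inv α) = _ at e2
  rw [hβα, hσ.norm_left, mul_one, ← hinv] at e2
  rw [e1, e2]
  simp [mul_assoc, mul_comm, mul_left_comm]

end Cocycle

section Convolution

variable {G R : Type*} [CommRing R] {T : GroupoidStruct G}

lemma conv_apply_eq_finsum_mem_mulFiber (σ : G → G → Rˣ) (f g : G → R) (γ : G) :
    conv T σ f g γ = ∑ᶠ p ∈ T.mulFiber γ, (σ p.1 p.2 : R) * f p.1 * g p.2 :=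
  rfl

lemma conv_apply_inv_mul (hG : T.IsGroupoid) (σ : G → G → Rˣ) (f g : G → R) {η γ : G}
    (hη : T.r η = T.r γ) :
    conv T σ f g (T.mul (T.inv η) γ) = ∑ᶠ β ∈ T.r ⁻¹' {T.r γ},
      (σ (T.mul (T.inv η) β) (T.mul (T.inv β) γ) : R) * f (T.mul (T.inv η) β) *
        g (T.mul (T.inv β) γ) := by
  symm
  refine finsum_mem_eq_of_bijOn (fun β => (T.mul (T.inv η) β, T.mul (T.inv β) γ))
    ⟨fun β hβ => ?_, fun β hβ β' hβ' h => ?_, fun p hp => ?_⟩ fun _ _ => rfl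
  · have hηβ : T.r η = T.r β := hη.trans hβ.symm
    exact ⟨hG.comp_inv_mul_inv_mul hηβ hβ, hG.inv_mul_mul_inv_mul hηβ hβ⟩
  · rw [← hG.mul_inv_cancel_left (hη.trans hβ.symm),
      ← hG.mul_inv_cancel_left (hη.trans hβ'.symm)]
    exact congrArg (T.mul η) (congrArg Prod.fst h)
  · obtain ⟨hc, hm⟩ := hp
    have hηp : T.comp η p.1 := by
      rw [hG.comp_iff, ← hG.r_mul _ _ hc, hm, hG.r_mul _ _ (hG.inv_comp_of_r_eq hη),
        hG.r_inv]
    have hηpp : T.comp (T.mul η p.1) p.2 := by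
      rw [hG.comp_iff, hG.s_mul _ _ hηp]
      exact (hG.comp_iff _ _).1 hc
    have hγ : T.mul (T.mul η p.1) p.2 = γ := by
      rw [hG.assoc _ _ _ hηp hc, hm, hG.mul_inv_cancel_left hη]
    refine ⟨T.mul η p.1, ?_, Prod.ext (hG.inv_mul_cancel_left hηp) ?_⟩
    · rw [mem_preimage, mem_singleton_iff, hG.r_mul _ _ hηp, hη]
    · dsimp only
      rw [← hγ, hG.inv_mul_cancel_left hηpp]

lemma conv_apply_eq_finsum_mem_fiber (hG : T.IsGroupoid) (σ : G → G → Rˣ) (f g : G → R)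
    (γ : G) :
    conv T σ f g γ = ∑ᶠ α ∈ T.r ⁻¹' {T.r γ},
      (σ α (T.mul (T.inv α) γ) : R) * f α * g (T.mul (T.inv α) γ) := by
  have hunit : ∀ β, T.r β = T.r γ → T.mul (T.inv (T.r γ)) β = β := fun β hβ => by
    rw [hG.inv_r, ← hβ, hG.r_mul_self]
  conv_lhs => rw [← hunit γ rfl, conv_apply_inv_mul hG σ f g (hG.r_unit γ)]
  exact finsum_mem_congr rfl fun β hβ => by rw [hunit β hβ]

lemma conv_zero_left (σ : G → G → Rˣ) (g : G → R) : conv T σ 0 g = 0 := by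
  ext γ
  simp [conv]

lemma support_conv_subset (σ : G → G → Rˣ) (f g : G → R) :
    support (conv T σ f g) ⊆ T.setMul (support f) (support g) := fun γ hγ => by
  obtain ⟨p, ⟨hc, hm⟩, hp⟩ := exists_ne_zero_of_finsum_mem_ne_zero hγ
  exact ⟨p.1, right_ne_zero_of_mul (left_ne_zero_of_mul hp), p.2, right_ne_zero_of_mul hp,
    hc, hm⟩

lemma conv_indicator_apply (hG : T.IsGroupoid) (σ : G → G → Rˣ) {B : Set G}
    (hB : InjOn T.r B) (a : R) (g : G → R) {α γ : G} (hα : α ∈ B)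
    (hαγ : T.r α = T.r γ) :
    conv T σ (B.indicator fun _ => a) g γ =
      (σ α (T.mul (T.inv α) γ) : R) * a * g (T.mul (T.inv α) γ) := by
  rw [conv_apply_eq_finsum_mem_fiber hG]
  refine (finsum_mem_inter_support_eq _ _ {α} (Set.ext fun β => ⟨?_, ?_⟩)).trans ?_
  · rintro ⟨hβ, hβs⟩
    have hβB : β ∈ B := by
      by_contra h
      simp [h] at hβs
    exact ⟨hB hβB hα (hβ.trans hαγ.symm), hβs⟩
  · rintro ⟨rfl, hβs⟩
    exact ⟨hαγ, hβs⟩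
  · rw [finsum_mem_singleton, indicator_of_mem hα]

lemma conv_indicator_apply_of_notMem (hG : T.IsGroupoid) (σ : G → G → Rˣ) {B : Set G}
    (a : R) (g : G → R) {γ : G} (hγ : γ ∉ T.r ⁻¹' (T.r '' B)) :
    conv T σ (B.indicator fun _ => a) g γ = 0 := by
  rw [conv_apply_eq_finsum_mem_fiber hG]
  refine finsum_mem_eq_zero_of_forall_eq_zero fun α hα => ?_
  have hαB : α ∉ B := fun h => hγ ⟨α, h, hα⟩
  simp [hαB]

variable [TopologicalSpace G]

lemma finite_fiber_inter_support (hample : T.IsAmple) {f : G → R}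
    (hf : f ∈ steinbergCarrier G R) (x : G) : (T.r ⁻¹' {x} ∩ support f).Finite := by
  rw [inter_comm]
  exact hample.finite_inter_r_preimage hf.2 x

lemma finite_fiber_inter_support_inv_mul (hample : T.IsAmple) (hG : T.IsGroupoid) {g : G → R}
    (hg : g ∈ steinbergCarrier G R) (γ : G) :
    (T.r ⁻¹' {T.r γ} ∩ {α | g (T.mul (T.inv α) γ) ≠ 0}).Finite := by
  have hrecover : ∀ α, T.r α = T.r γ → T.mul γ (T.inv (T.mul (T.inv α) γ)) = α := by
    intro α hα
    rw [hG.inv_mul (hG.inv_comp_of_r_eq hα), hG.inv_inv, hG.mul_inv_cancel_left hα.symm]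
  refine Finite.of_finite_image (f := fun α => T.mul (T.inv α) γ)
    ((hample.finite_inter_s_preimage hg.2 (T.s γ)).subset ?_) fun α hα α' hα' h => ?_
  · rintro _ ⟨α, ⟨hα, hgα⟩, rfl⟩
    exact ⟨hgα, hG.s_mul _ _ (hG.inv_comp_of_r_eq hα)⟩
  · rw [← hrecover α hα.1, ← hrecover α' hα'.1]
    exact congrArg (fun x => T.mul γ (T.inv x)) h

lemma finite_mulFiber_inter_support (hample : T.IsAmple) (hG : T.IsGroupoid) {f : G → R}
    (hf : f ∈ steinbergCarrier G R) (σ : G → G → Rˣ) (g : G → R) (γ : G) :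
    (T.mulFiber γ ∩ support fun p : G × G => (σ p.1 p.2 : R) * f p.1 * g p.2).Finite := by
  refine Finite.of_finite_image ((finite_fiber_inter_support hample hf (T.r γ)).subset ?_)
    fun p hp q hq h => Prod.ext h ?_
  · rintro _ ⟨p, ⟨⟨hc, hm⟩, hp⟩, rfl⟩
    exact ⟨by rw [mem_preimage, mem_singleton_iff, ← hm, ← hG.r_mul _ _ hc],
      right_ne_zero_of_mul (left_ne_zero_of_mul hp)⟩
  · rw [← hG.inv_mul_cancel_left hp.1.1, hp.1.2, h, ← hq.1.2, hG.inv_mul_cancel_left hq.1.1]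

lemma conv_add_left (hample : T.IsAmple) (hG : T.IsGroupoid) (σ : G → G → Rˣ)
    (f₁ f₂ : G → R) {g : G → R} (hg : g ∈ steinbergCarrier G R) :
    conv T σ (f₁ + f₂) g = conv T σ f₁ g + conv T σ f₂ g := by
  ext γ
  have hfin := finite_fiber_inter_support_inv_mul hample hG hg γ
  simp only [Pi.add_apply, conv_apply_eq_finsum_mem_fiber hG, mul_add, add_mul]
  exact finsum_mem_add_distrib'
    (hfin.subset (inter_subset_inter_right _ fun _ => right_ne_zero_of_mul))
    (hfin.subset (inter_subset_inter_right _ fun _ => right_ne_zero_of_mul))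

lemma conv_add_right (hample : T.IsAmple) (hG : T.IsGroupoid) (σ : G → G → Rˣ) {f : G → R}
    (hf : f ∈ steinbergCarrier G R) (g₁ g₂ : G → R) :
    conv T σ f (g₁ + g₂) = conv T σ f g₁ + conv T σ f g₂ := by
  ext γ
  have hfin := finite_fiber_inter_support hample hf (T.r γ)
  simp only [Pi.add_apply, conv_apply_eq_finsum_mem_fiber hG, mul_add]
  exact finsum_mem_add_distrib'
    (hfin.subset (inter_subset_inter_right _ fun _ h =>
      right_ne_zero_of_mul (left_ne_zero_of_mul h)))
    (hfin.subset (inter_subset_inter_right _ fun _ h =>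
      right_ne_zero_of_mul (left_ne_zero_of_mul h)))

lemma conv_smul_left (hample : T.IsAmple) (hG : T.IsGroupoid) (σ : G → G → Rˣ) (a : R)
    (f : G → R) {g : G → R} (hg : g ∈ steinbergCarrier G R) :
    conv T σ (a • f) g = a • conv T σ f g := by
  ext γ
  simp only [Pi.smul_apply, smul_eq_mul, conv_apply_eq_finsum_mem_fiber hG]
  rw [mul_finsum_mem_of_finite_inter_support _ ((finite_fiber_inter_support_inv_mul hample hG hg
    γ).subset (inter_subset_inter_right _ fun _ => right_ne_zero_of_mul))]
  exact finsum_mem_congr rfl fun _ _ => by ring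

lemma conv_smul_right (hample : T.IsAmple) (hG : T.IsGroupoid) (σ : G → G → Rˣ) (a : R)
    {f : G → R} (hf : f ∈ steinbergCarrier G R) (g : G → R) :
    conv T σ f (a • g) = a • conv T σ f g := by
  ext γ
  simp only [Pi.smul_apply, smul_eq_mul, conv_apply_eq_finsum_mem_fiber hG]
  rw [mul_finsum_mem_of_finite_inter_support _ ((finite_fiber_inter_support hample hf
    (T.r γ)).subset (inter_subset_inter_right _ fun _ h =>
      right_ne_zero_of_mul (left_ne_zero_of_mul h)))]
  exact finsum_mem_congr rfl fun _ _ => by ring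

lemma conv_assoc [TopologicalSpace R] (hample : T.IsAmple) (hG : T.IsGroupoid)
    {σ : G → G → Rˣ} (hσ : IsCocycle (R := R) T σ) {f h : G → R}
    (hf : f ∈ steinbergCarrier G R) (g : G → R)
    (hh : h ∈ steinbergCarrier G R) :
    conv T σ (conv T σ f g) h = conv T σ f (conv T σ g h) := by
  ext γ
  have hA := finite_fiber_inter_support hample hf (T.r γ)
  have hB := finite_fiber_inter_support_inv_mul hample hG hh γ
  have hAF : ↑hA.toFinset ⊆ T.r ⁻¹' {T.r γ} := fun α hα => (hA.mem_toFinset.1 hα).1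
  have hBF : ↑hB.toFinset ⊆ T.r ⁻¹' {T.r γ} := fun β hβ => (hB.mem_toFinset.1 hβ).1
  have lhs : conv T σ (conv T σ f g) h γ = ∑ β ∈ hB.toFinset, ∑ α ∈ hA.toFinset,
      (σ β (T.mul (T.inv β) γ) : R) * ((σ α (T.mul (T.inv α) β) : R) * f α *
        g (T.mul (T.inv α) β)) * h (T.mul (T.inv β) γ) := by
    rw [conv_apply_eq_finsum_mem_fiber hG, finsum_mem_eq_sum_of_subset _ ?_ hBF]
    · refine Finset.sum_congr rfl fun β hβ => ?_
      rw [conv_apply_eq_finsum_mem_fiber hG, (hB.mem_toFinset.1 hβ).1,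
        finsum_mem_eq_sum_of_subset _ ?_ hAF, Finset.mul_sum, Finset.sum_mul]
      exact fun α hα => hA.mem_toFinset.2
        ⟨hα.1, right_ne_zero_of_mul (left_ne_zero_of_mul hα.2)⟩
    · exact fun β hβ => hB.mem_toFinset.2 ⟨hβ.1, right_ne_zero_of_mul hβ.2⟩
  have rhs : conv T σ f (conv T σ g h) γ = ∑ α ∈ hA.toFinset, ∑ β ∈ hB.toFinset,
      (σ α (T.mul (T.inv α) γ) : R) * f α *
        ((σ (T.mul (T.inv α) β) (T.mul (T.inv β) γ) : R) * g (T.mul (T.inv α) β) *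
          h (T.mul (T.inv β) γ)) := by
    rw [conv_apply_eq_finsum_mem_fiber hG, finsum_mem_eq_sum_of_subset _ ?_ hAF]
    · refine Finset.sum_congr rfl fun α hα => ?_
      rw [conv_apply_inv_mul hG σ g h (hA.mem_toFinset.1 hα).1,
        finsum_mem_eq_sum_of_subset _ ?_ hBF, Finset.mul_sum]
      exact fun β hβ => hB.mem_toFinset.2 ⟨hβ.1, right_ne_zero_of_mul hβ.2⟩
    · exact fun α hα => hA.mem_toFinset.2
        ⟨hα.1, right_ne_zero_of_mul (left_ne_zero_of_mul hα.2)⟩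
  rw [lhs, rhs, Finset.sum_comm]
  refine Finset.sum_congr rfl fun α hα => Finset.sum_congr rfl fun β hβ => ?_
  have hβγ : T.r β = T.r γ := (hB.mem_toFinset.1 hβ).1
  have hcoc := congrArg Units.val
    (hσ.cocycle_inv_mul hG ((hA.mem_toFinset.1 hα).1.trans hβγ.symm) hβγ)
  simp only [Units.val_mul] at hcoc
  linear_combination (f α * g (T.mul (T.inv α) β) * h (T.mul (T.inv β) γ)) * hcoc

lemma isLocallyConstant_conv_indicator [T2Space G] [TopologicalSpace R] [DiscreteTopology R]
    (hT : T.IsTopGroupoid) {σ : G → G → Rˣ} (hσ : IsCocycle (R := R) T σ) {B : Set G}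
    (hBc : IsCompact B) (hBo : IsOpen B) (hB : T.IsBisection B) (a : R) {g : G → R}
    (hg : IsLocallyConstant g) : IsLocallyConstant (conv T σ (B.indicator fun _ => a) g) := by
  have hG := hT.toIsGroupoid
  obtain ⟨U, hBU, -, hrU, -, hopen⟩ := hB
  have hrB : InjOn T.r B := hrU.mono hBU
  set O := T.r ⁻¹' (T.r '' B)
  have hO : IsClopen O := ⟨(hBc.image hT.continuous_r).isClosed.preimage hT.continuous_r,
    (hopen B hBU hBo).1.preimage hT.continuous_r⟩
  rw [IsLocallyConstant.iff_eventually_eq]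
  intro γ
  by_cases hγ : γ ∈ O
  swap
  · filter_upwards [hO.isClosed.isOpen_compl.mem_nhds hγ] with γ' hγ'
    rw [conv_indicator_apply_of_notMem hG σ a g hγ', conv_indicator_apply_of_notMem hG σ a g hγ]
  have : Nonempty G := ⟨γ⟩
  set A := fun γ' => invFunOn T.r B (T.r γ')
  have hA : ∀ γ' ∈ O, A γ' ∈ B ∧ T.r (A γ') = T.r γ' := fun _ h => invFunOn_pos h
  have hAc : ContinuousOn A O :=
    (continuousOn_invFunOn_image hBo hrB fun V hV hVo => (hopen V (hV.trans hBU) hVo).1).comp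
      hT.continuous_r.continuousOn fun _ h => h
  have hmc : ContinuousOn (fun γ' => T.mul (T.inv (A γ')) γ') O :=
    hT.continuousOn_mul.comp ((hT.continuous_inv.comp_continuousOn hAc).prodMk continuousOn_id)
      fun γ' h => hG.inv_comp_of_r_eq (hA γ' h).2
  have hφ : ContinuousOn (fun γ' => ((σ (A γ') (T.mul (T.inv (A γ')) γ') : R),
      g (T.mul (T.inv (A γ')) γ'))) O :=
    (hσ.continuousOn.comp (hAc.prodMk hmc) fun γ' h => hG.comp_inv_mul (hA γ' h).2).prodMk
      (hg.continuous.comp_continuousOn hmc)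
  have hev := (hφ.continuousAt (hO.isOpen.mem_nhds hγ)).tendsto
  rw [nhds_discrete (R × R), tendsto_pure] at hev
  filter_upwards [hev, hO.isOpen.mem_nhds hγ] with γ' h1 h2
  rw [conv_indicator_apply hG σ hrB a g (hA γ' h2).1 (hA γ' h2).2,
    conv_indicator_apply hG σ hrB a g (hA γ hγ).1 (hA γ hγ).2]
  simp only [Prod.mk.injEq] at h1
  rw [h1.1, h1.2]

def bisectionIndicators (T : GroupoidStruct G) (R : Type*) [Zero R] : Set (G → R) :=
  {φ | ∃ B : Set G, IsCompact B ∧ IsOpen B ∧ T.IsBisection B ∧ ∃ a : R,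
    φ = B.indicator fun _ => a}

lemma indicator_mem_closure_bisectionIndicators [T2Space G] {f : G → R} {ι : Type*}
    {B : ι → Set G} (t : Finset ι)
    (hB : ∀ i ∈ t, IsCompact (B i) ∧ IsOpen (B i) ∧ T.IsBisection (B i) ∧
      ∃ a, ∀ x ∈ B i, f x = a) :
    ∀ A : Set G, IsCompact A → IsOpen A → A ⊆ ⋃ i ∈ t, B i →
      A.indicator f ∈ AddSubmonoid.closure (bisectionIndicators T R) := by
  classical
  induction t using Finset.induction_on with
  | empty =>
    intro A _ _ hA
    have hA0 : A = ∅ := subset_empty_iff.1 (by simpa using hA)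
    rw [hA0, indicator_empty]
    exact zero_mem _
  | insert i t hi ih =>
    intro A hAc hAo hA
    obtain ⟨hBc, hBo, hBb, a, ha⟩ := hB i (Finset.mem_insert_self i t)
    have hsplit : A.indicator f = (A ∩ B i).indicator (fun _ => a) + (A \ B i).indicator f := by
      ext x
      by_cases hxA : x ∈ A <;> by_cases hxB : x ∈ B i <;> simp [hxA, hxB, ha]
    rw [hsplit]
    refine add_mem (AddSubmonoid.subset_closure ⟨A ∩ B i, hAc.inter_right hBc.isClosed,
      hAo.inter hBo, hBb.mono inter_subset_right, a, rfl⟩)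
      (ih (fun j hj => hB j (Finset.mem_insert_of_mem hj)) _ (hAc.diff hBo)
        (hAo.sdiff hBc.isClosed) fun x hx => ?_)
    obtain ⟨j, hj, hxj⟩ := mem_iUnion₂.1 (hA hx.1)
    rcases Finset.mem_insert.1 hj with rfl | hj
    · exact absurd hxj hx.2
    · exact mem_iUnion₂.2 ⟨j, hj, hxj⟩

lemma mem_closure_bisectionIndicators [T2Space G] (hample : T.IsAmple) {f : G → R}
    (hf : f ∈ steinbergCarrier G R) :
    f ∈ AddSubmonoid.closure (bisectionIndicators T R) := by
  have hcover : ∀ x, ∃ B : Set G, (IsCompact B ∧ IsOpen B ∧ T.IsBisection B) ∧ x ∈ B ∧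
      B ⊆ f ⁻¹' {f x} := fun x => hample.exists_subset_of_mem_open rfl (hf.1 _)
  choose B hB hxB hBf using hcover
  obtain ⟨t, -, ht⟩ := hf.2.elim_nhds_subcover B fun x _ => (hB x).2.1.mem_nhds (hxB x)
  simpa only [indicator_support] using indicator_mem_closure_bisectionIndicators t
    (fun x _ => ⟨(hB x).1, (hB x).2.1, (hB x).2.2, f x, fun _ hy => hBf x hy⟩) _ hf.2
    hf.1.isClopen_support.isOpen ht

lemma isLocallyConstant_conv [T2Space G] [TopologicalSpace R] [DiscreteTopology R]
    (hample : T.IsAmple) (hT : T.IsTopGroupoid) {σ : G → G → Rˣ}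
    (hσ : IsCocycle (R := R) T σ)
    {f g : G → R} (hf : f ∈ steinbergCarrier G R) (hg : g ∈ steinbergCarrier G R) :
    IsLocallyConstant (conv T σ f g) := by
  refine AddSubmonoid.closure_induction (motive := fun φ _ => IsLocallyConstant (conv T σ φ g))
    ?_ ?_ ?_ (mem_closure_bisectionIndicators hample hf)
  · rintro _ ⟨B, hBc, hBo, hB, a, rfl⟩
    exact isLocallyConstant_conv_indicator hT hσ hBc hBo hB a hg.1
  · rw [conv_zero_left]
    exact IsLocallyConstant.const 0
  · intro φ ψ _ _ hφ hψ
    rw [conv_add_left hample hT.toIsGroupoid σ φ ψ hg]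
    exact hφ.add hψ

lemma conv_mem_steinbergCarrier [T2Space G] [TopologicalSpace R] [DiscreteTopology R]
    (hample : T.IsAmple) (hT : T.IsTopGroupoid) {σ : G → G → Rˣ}
    (hσ : IsCocycle (R := R) T σ)
    {f g : G → R} (hf : f ∈ steinbergCarrier G R) (hg : g ∈ steinbergCarrier G R) :
    conv T σ f g ∈ steinbergCarrier G R := by
  have hlc := isLocallyConstant_conv hample hT hσ hf hg
  exact ⟨hlc, (hT.isCompact_setMul hf.2 hg.2).of_isClosed_subset
    hlc.isClopen_support.isClosed (support_conv_subset σ f g)⟩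

end Convolution

section Involution

variable {G R : Type*} [CommRing R] {T : GroupoidStruct G}

lemma IsTInverseInvolution.map_add {Tsub : Subgroup Rˣ} {c : R → R}
    (hc : IsTInverseInvolution Tsub c) (x y : R) : c (x + y) = c x + c y :=
  hc.2.1 x y

lemma IsTInverseInvolution.map_mul {Tsub : Subgroup Rˣ} {c : R → R}
    (hc : IsTInverseInvolution Tsub c) (x y : R) : c (x * y) = c x * c y :=
  hc.2.2.1 x y

lemma IsTInverseInvolution.apply_apply {Tsub : Subgroup Rˣ} {c : R → R}
    (hc : IsTInverseInvolution Tsub c) (x : R) : c (c x) = x :=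
  hc.2.2.2.1 x

lemma IsTInverseInvolution.apply_units {Tsub : Subgroup Rˣ} {c : R → R}
    (hc : IsTInverseInvolution Tsub c) {z : Rˣ} (hz : z ∈ Tsub) : c z = (z⁻¹ : Rˣ) :=
  hc.2.2.2.2 z hz

def IsTInverseInvolution.ringHom {Tsub : Subgroup Rˣ} {c : R → R}
    (hc : IsTInverseInvolution Tsub c) : R →+* R where
  toFun := c
  map_one' := hc.1
  map_mul' := hc.map_mul
  map_zero' := by simpa using hc.map_add 0 0
  map_add' := hc.map_add

lemma IsTInverseInvolution.coe_ringHom {Tsub : Subgroup Rˣ} {c : R → R}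
    (hc : IsTInverseInvolution Tsub c) : ⇑hc.ringHom = c :=
  rfl

lemma convStar_add (σ : G → G → Rˣ) {Tsub : Subgroup Rˣ} {c : R → R}
    (hc : IsTInverseInvolution Tsub c) (f g : G → R) :
    convStar T σ c (f + g) = convStar T σ c f + convStar T σ c g := by
  ext γ
  simp only [convStar, Pi.add_apply, hc.map_add, mul_add]

lemma convStar_smul (σ : G → G → Rˣ) {Tsub : Subgroup Rˣ} {c : R → R}
    (hc : IsTInverseInvolution Tsub c) (a : R) (f : G → R) :
    convStar T σ c (a • f) = c a • convStar T σ c f := by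
  ext γ
  simp only [convStar, Pi.smul_apply, smul_eq_mul, hc.map_mul]
  ring

variable [TopologicalSpace G] [TopologicalSpace R] {σ : G → G → Rˣ}

lemma isLocallyConstant_convStar [DiscreteTopology R] (hT : T.IsTopGroupoid)
    (hσ : IsCocycle (R := R) T σ) (c : R → R) {f : G → R} (hf : IsLocallyConstant f) :
    IsLocallyConstant (convStar T σ c f) := by
  have hσinv : IsLocallyConstant fun γ => σ γ (T.inv γ) :=
    IsLocallyConstant.desc _ Units.val ((IsLocallyConstant.iff_continuous _).2
      (hσ.continuousOn.comp_continuous (continuous_id.prodMk hT.continuous_inv)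
        hT.comp_inv_self)) Units.val_injective
  exact (hσinv.comp fun u => ((u⁻¹ : Rˣ) : R)).comp₂
    ((hf.comp_continuous hT.continuous_inv).comp c) (· * ·)

lemma convStar_mem_steinbergCarrier [DiscreteTopology R] (hT : T.IsTopGroupoid)
    (hσ : IsCocycle (R := R) T σ) {Tsub : Subgroup Rˣ} {c : R → R}
    (hc : IsTInverseInvolution Tsub c) {f : G → R} (hf : f ∈ steinbergCarrier G R) :
    convStar T σ c f ∈ steinbergCarrier G R := by
  have hlc := isLocallyConstant_convStar hT hσ c hf.1
  refine ⟨hlc, (hf.2.image hT.continuous_inv).of_isClosed_subset hlc.isClopen_support.isClosed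
    fun γ hγ => ⟨T.inv γ, fun h0 => hγ ?_, hT.inv_inv γ⟩⟩
  rw [convStar, h0, ← hc.coe_ringHom, map_zero, mul_zero]

lemma convStar_convStar (hG : T.IsGroupoid) (hσ : IsCocycle (R := R) T σ)
    {Tsub : Subgroup Rˣ} {c : R → R} (hc : IsTInverseInvolution Tsub c)
    (hσT : ∀ a b, σ a b ∈ Tsub) (f : G → R) :
    convStar T σ c (convStar T σ c f) = f := by
  ext γ
  simp only [convStar, hG.inv_inv, hc.map_mul, hc.apply_apply]
  rw [hc.apply_units (inv_mem (hσT _ _)), inv_inv, ← hσ.apply_inv_comm hG, ← mul_assoc,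
    ← Units.val_mul, inv_mul_cancel, Units.val_one, one_mul]

lemma convStar_conv (hample : T.IsAmple) (hG : T.IsGroupoid) (hσ : IsCocycle (R := R) T σ)
    {Tsub : Subgroup Rˣ} {c : R → R} (hc : IsTInverseInvolution Tsub c)
    (hσT : ∀ a b, σ a b ∈ Tsub) {f : G → R} (hf : f ∈ steinbergCarrier G R)
    (g : G → R) :
    convStar T σ c (conv T σ f g) = conv T σ (convStar T σ c g) (convStar T σ c f) := by
  ext γ
  have hbij : BijOn (fun p : G × G => (T.inv p.2, T.inv p.1)) (T.mulFiber (T.inv γ))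
      (T.mulFiber γ) :=
    InvOn.bijOn ⟨fun p _ => by simp only [hG.inv_inv], fun p _ => by simp only [hG.inv_inv]⟩
      (by simpa only [hG.inv_inv] using hG.mapsTo_swap_inv_mulFiber (T.inv γ))
      (hG.mapsTo_swap_inv_mulFiber γ)
  have hsum := ((AddMonoidHom.mulLeft (((σ γ (T.inv γ))⁻¹ : Rˣ) : R)).comp
    hc.ringHom.toAddMonoidHom).map_finsum_mem'
      (finite_mulFiber_inter_support hample hG hf σ g (T.inv γ))
  simp only [AddMonoidHom.coe_comp, comp_apply, AddMonoidHom.coe_mulLeft,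
    RingHom.toAddMonoidHom_eq_coe, AddMonoidHom.coe_coe, hc.coe_ringHom] at hsum
  rw [convStar, conv_apply_eq_finsum_mem_mulFiber, hsum, conv_apply_eq_finsum_mem_mulFiber]
  refine finsum_mem_eq_of_bijOn _ hbij fun ⟨α, β⟩ ⟨hαβ, hm⟩ => ?_
  obtain rfl : γ = T.inv (T.mul α β) := by rw [hm, hG.inv_inv]
  have key : (σ (T.inv (T.mul α β)) (T.mul α β))⁻¹ * (σ α β)⁻¹ =
      σ (T.inv β) (T.inv α) * (σ (T.inv β) β)⁻¹ * (σ (T.inv α) α)⁻¹ := by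
    rw [hσ.apply_inv_inv hG hαβ, ← hσ.apply_inv_comm hG α, ← hσ.apply_inv_comm hG β,
      ← hσ.apply_inv_comm hG (T.mul α β)]
    simp [mul_assoc, mul_comm, mul_left_comm]
  have keyR := congrArg Units.val key
  simp only [Units.val_mul] at keyR
  simp only [convStar, hG.inv_inv, hc.map_mul, hc.apply_units (hσT α β)]
  linear_combination (c (f α) * c (g β)) * keyR

end Involution

theorem twistedSteinbergAlgebra_isAlgebra_general
    {G R : Type*} [TopologicalSpace G] [T2Space G]
    [CommRing R] [TopologicalSpace R] [DiscreteTopology R]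
    (T : GroupoidStruct G) (hT : T.IsTopGroupoid) (hample : T.IsAmple)
    (σ : G → G → Rˣ) (hσ : IsCocycle (R := R) T σ) :
    -- `A_R(G,σ)` is closed under the twisted convolution
    (∀ f g, f ∈ steinbergCarrier G R → g ∈ steinbergCarrier G R →
        conv T σ f g ∈ steinbergCarrier G R)
    -- the twisted convolution is associative
    ∧ (∀ f g h, f ∈ steinbergCarrier G R → g ∈ steinbergCarrier G R →
        h ∈ steinbergCarrier G R →
        conv T σ (conv T σ f g) h = conv T σ f (conv T σ g h))
    -- the twisted convolution is biadditive
    ∧ (∀ f g h, f ∈ steinbergCarrier G R → g ∈ steinbergCarrier G R →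
        h ∈ steinbergCarrier G R →
        conv T σ (f + g) h = conv T σ f h + conv T σ g h
          ∧ conv T σ f (g + h) = conv T σ f g + conv T σ f h)
    -- and `R`-bilinear
    ∧ (∀ (a : R) (f g : G → R), f ∈ steinbergCarrier G R →
        g ∈ steinbergCarrier G R →
        conv T σ (a • f) g = a • conv T σ f g
          ∧ conv T σ f (a • g) = a • conv T σ f g)
    -- if `R` has a `T`-inverse involution and `σ` is `Tsub`-valued, then
    -- `A_R(G,σ)` is a `*`-algebra over `R`
    ∧ (∀ (Tsub : Subgroup Rˣ) (c : R → R), IsTInverseInvolution Tsub c →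
        (∀ a b, σ a b ∈ Tsub) →
        (∀ f, f ∈ steinbergCarrier G R →
            convStar T σ c f ∈ steinbergCarrier G R)
        ∧ (∀ f g, f ∈ steinbergCarrier G R → g ∈ steinbergCarrier G R →
            convStar T σ c (conv T σ f g)
              = conv T σ (convStar T σ c g) (convStar T σ c f))
        ∧ (∀ f, f ∈ steinbergCarrier G R →
            convStar T σ c (convStar T σ c f) = f)
        ∧ (∀ f g : G → R,
            convStar T σ c (f + g) = convStar T σ c f + convStar T σ c g)
        ∧ (∀ (a : R) (f : G → R),
            convStar T σ c (a • f) = c a • convStar T σ c f)) := by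
  have hG := hT.toIsGroupoid
  refine ⟨fun f g hf hg => conv_mem_steinbergCarrier hample hT hσ hf hg,
    fun f g h hf _ hh => conv_assoc hample hG hσ hf g hh,
    fun f g h hf _ hh =>
      ⟨conv_add_left hample hG σ f g hh, conv_add_right hample hG σ hf g h⟩,
    fun a f g hf hg =>
      ⟨conv_smul_left hample hG σ a f hg, conv_smul_right hample hG σ a hf g⟩,
    fun Tsub c hc hσT => ⟨fun f hf => convStar_mem_steinbergCarrier hT hσ hc hf,
      fun f g hf _ => convStar_conv hample hG hσ hc hσT hf g,
      fun f _ => convStar_convStar hG hσ hc hσT f,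
      convStar_add σ hc, convStar_smul σ hc⟩⟩

/-- For an ample Hausdorff groupoid `G` and a continuous
normalised 2-cocycle `σ : G⁽²⁾ → Rˣ`, the twisted Steinberg algebra
`A_R(G, σ)` is an associative `R`-algebra under the twisted convolution
product; if moreover `R` has a `T`-inverse involution `c` for some
`Tsub ≤ Rˣ` and `σ` is `Tsub`-valued, then `f* (γ) = σ(γ,γ⁻¹)⁻¹ c(f(γ⁻¹))`
is an involution making `A_R(G, σ)` a `*`-algebra over `R`. -/
theorem twistedSteinbergAlgebra_isAlgebra
    {G R : Type*} [TopologicalSpace G] [T2Space G] [LocallyCompactSpace G]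
    [CommRing R] [TopologicalSpace R] [DiscreteTopology R]
    (T : GroupoidStruct G) (hT : T.IsTopGroupoid) (hample : T.IsAmple)
    (σ : G → G → Rˣ) (hσ : IsCocycle (R := R) T σ) :
    -- `A_R(G,σ)` is closed under the twisted convolution
    (∀ f g, f ∈ steinbergCarrier G R → g ∈ steinbergCarrier G R →
        conv T σ f g ∈ steinbergCarrier G R)
    -- the twisted convolution is associative
    ∧ (∀ f g h, f ∈ steinbergCarrier G R → g ∈ steinbergCarrier G R →
        h ∈ steinbergCarrier G R →
        conv T σ (conv T σ f g) h = conv T σ f (conv T σ g h))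
    -- the twisted convolution is biadditive
    ∧ (∀ f g h, f ∈ steinbergCarrier G R → g ∈ steinbergCarrier G R →
        h ∈ steinbergCarrier G R →
        conv T σ (f + g) h = conv T σ f h + conv T σ g h
          ∧ conv T σ f (g + h) = conv T σ f g + conv T σ f h)
    -- and `R`-bilinear
    ∧ (∀ (a : R) (f g : G → R), f ∈ steinbergCarrier G R →
        g ∈ steinbergCarrier G R →
        conv T σ (a • f) g = a • conv T σ f g
          ∧ conv T σ f (a • g) = a • conv T σ f g)
    -- if `R` has a `T`-inverse involution and `σ` is `Tsub`-valued, then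
    -- `A_R(G,σ)` is a `*`-algebra over `R`
    ∧ (∀ (Tsub : Subgroup Rˣ) (c : R → R), IsTInverseInvolution Tsub c →
        (∀ a b, σ a b ∈ Tsub) →
        (∀ f, f ∈ steinbergCarrier G R →
            convStar T σ c f ∈ steinbergCarrier G R)
        ∧ (∀ f g, f ∈ steinbergCarrier G R → g ∈ steinbergCarrier G R →
            convStar T σ c (conv T σ f g)
              = conv T σ (convStar T σ c g) (convStar T σ c f))
        ∧ (∀ f, f ∈ steinbergCarrier G R →
            convStar T σ c (convStar T σ c f) = f)
        ∧ (∀ f g : G → R,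
            convStar T σ c (f + g) = convStar T σ c f + convStar T σ c g)
        ∧ (∀ (a : R) (f : G → R),
            convStar T σ c (a • f) = c a • convStar T σ c f)) :=
  twistedSteinbergAlgebra_isAlgebra_general T hT hample σ hσ

end TwistedSteinberg
end

section
/- Let G be an ample Hausdorff groupoid, let T ≤ R^× be a subgroup, suppose R has a T-inverse involution, and let σ : G^(2) → T be a continuous 2-cocycle. For compact open bisections B, D of G: (a) for all composable (α,β) ∈ (B × D) ∩ G^(2), (1_B *_σ 1_D)(αβ) = σ(α,β); (b) if B ⊆ G^(0) or D ⊆ G^(0), then 1_B *_σ 1_D = 1_{BD}; (c) 1_B*(γ) = σ(γ,γ^{-1})^{-1} 1_{B^{-1}}(γ) for all γ ∈ G; (d) 1_B *_σ 1_B* = 1_{r(B)} and 1_B* *_σ 1_B = 1_{s(B)}; (e) 1_B *_σ 1_B* *_σ 1_B = 1_B and 1_B* *_σ 1_B *_σ 1_B* = 1_B*. -/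
/-!
Common definitions: topological groupoids, bisections, étale/ample groupoids,
continuous `Rˣ`-valued 2-cocycles, and twisted Steinberg algebras.

A groupoid is modelled as a type `G` together with a composability predicate
`comp`, a (partial, junk-valued off composable pairs) multiplication `mul`,
and an inversion `inv`.  The range and source maps are `r γ = γ γ⁻¹` and
`s γ = γ⁻¹ γ`, and the unit space is the set of fixed points of `r`.
-/

namespace TwistedSteinberg

open GroupoidStruct

section Helpers

variable {G R : Type*} [TopologicalSpace G] [CommRing R] [TopologicalSpace R]
variable {T : GroupoidStruct G}

open Classical in
lemma conv_apply (σ : G → G → Rˣ) (f g : G → R) (γ : G) :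
    conv T σ f g γ = ∑ᶠ p : G × G,
      if T.comp p.1 p.2 ∧ T.mul p.1 p.2 = γ then
        ((σ p.1 p.2 : Rˣ) : R) * f p.1 * g p.2 else 0 := by
  unfold conv
  exact finsum_congr fun p => finsum_eq_if

lemma conv_eq_of_unique (σ : G → G → Rˣ) (f g : G → R) {γ α β : G}
    (hco : T.comp α β) (hm : T.mul α β = γ)
    (hu : ∀ a b, T.comp a b → T.mul a b = γ → f a ≠ 0 → g b ≠ 0 → a = α ∧ b = β) :
    conv T σ f g γ = ((σ α β : Rˣ) : R) * f α * g β := by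
  classical
  rw [conv_apply]
  rw [finsum_eq_single _ (α, β)]
  · rw [if_pos ⟨hco, hm⟩]
  · rintro ⟨a, b⟩ hne
    simp only
    split_ifs with h
    · by_cases hf : f a = 0
      · rw [hf, mul_zero, zero_mul]
      by_cases hg : g b = 0
      · rw [hg, mul_zero]
      rcases hu a b h.1 h.2 hf hg with ⟨rfl, rfl⟩
      exact absurd rfl hne
    · rfl

lemma conv_eq_zero (σ : G → G → Rˣ) (f g : G → R) {γ : G}
    (h : ∀ a b, T.comp a b → T.mul a b = γ → f a = 0 ∨ g b = 0) :
    conv T σ f g γ = 0 := by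
  classical
  rw [conv_apply]
  apply finsum_eq_zero_of_forall_eq_zero
  rintro ⟨a, b⟩
  simp only
  split_ifs with hp
  · rcases h a b hp.1 hp.2 with h0 | h0 <;> rw [h0] <;> ring
  · rfl

set_option linter.unusedSectionVars false

variable (hG : T.IsGroupoid)
include hG

lemma comp_inv_right (a : G) : T.comp a (T.inv a) := by
  rw [hG.comp_iff, hG.r_inv]

lemma comp_inv_left (a : G) : T.comp (T.inv a) a := by
  rw [hG.comp_iff, hG.s_inv]

lemma unit_s {x : G} (hx : x ∈ T.unitSpace) : T.s x = x := by
  have h1 : T.comp x (T.inv x) := comp_inv_right hG x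
  have h2 : T.s (T.mul x (T.inv x)) = T.s (T.inv x) := hG.s_mul _ _ h1
  have h3 : T.mul x (T.inv x) = x := hx
  rw [h3, hG.s_inv] at h2
  rw [h2]; exact hx

lemma unit_r {x : G} (hx : x ∈ T.unitSpace) : T.r x = x := hx

lemma comp_s_self (a : G) : T.comp a (T.s a) := by
  rw [hG.comp_iff, unit_r hG (hG.s_unit a)]

lemma sigma_inv_comm {σ : G → G → Rˣ}
    (hσ : IsCocycle (R := R) T σ) (a : G) : σ a (T.inv a) = σ (T.inv a) a := by
  have h := hσ.cocycle a (T.inv a) a (comp_inv_right hG a) (comp_inv_left hG a)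
  have hr : T.mul a (T.inv a) = T.r a := rfl
  have hs : T.mul (T.inv a) a = T.s a := rfl
  rw [hr, hs, hσ.norm_left, hσ.norm_right, mul_one, one_mul] at h
  exact h

end Helpers

/-- Properties of the generators `1_B` of the twisted
Steinberg algebra `A_R(G, σ)` for compact open bisections `B, D` of an ample
Hausdorff groupoid `G`, where `σ` is a continuous 2-cocycle valued in a
subgroup `Tsub ≤ Rˣ` and `c` is a `T`-inverse involution on `R`. -/
theorem indicator_conv_properties
    {G R : Type*} [TopologicalSpace G] [T2Space G] [LocallyCompactSpace G]
    [CommRing R] [TopologicalSpace R] [DiscreteTopology R]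
    (T : GroupoidStruct G) (hT : T.IsTopGroupoid) (hample : T.IsAmple)
    (Tsub : Subgroup Rˣ) (c : R → R) (hc : IsTInverseInvolution Tsub c)
    (σ : G → G → Rˣ) (hσ : IsCocycle (R := R) T σ) (hσT : ∀ a b, σ a b ∈ Tsub)
    (B D : Set G) (hBc : IsCompact B) (hBo : IsOpen B) (hBb : T.IsBisection B)
    (hDc : IsCompact D) (hDo : IsOpen D) (hDb : T.IsBisection D) :
    -- (a) `(1_B *σ 1_D)(αβ) = σ(α,β)` for composable `(α,β) ∈ B × D`
    (∀ α β, α ∈ B → β ∈ D → T.comp α β →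
      conv T σ (B.indicator 1) (D.indicator 1) (T.mul α β) = ((σ α β : Rˣ) : R))
    -- (b) if `B ⊆ G⁰` or `D ⊆ G⁰` then `1_B *σ 1_D = 1_{BD}`
    ∧ ((B ⊆ T.unitSpace ∨ D ⊆ T.unitSpace) →
        conv T σ (B.indicator 1) (D.indicator 1) = (T.setMul B D).indicator 1)
    -- (c) `1_B*(γ) = σ(γ,γ⁻¹)⁻¹ 1_{B⁻¹}(γ)`
    ∧ (∀ γ : G, convStar T σ c (B.indicator 1) γ
        = (((σ γ (T.inv γ))⁻¹ : Rˣ) : R) * (T.inv '' B).indicator 1 γ)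
    -- (d) `1_B 1_B* = 1_{r(B)}` and `1_B* 1_B = 1_{s(B)}`
    ∧ conv T σ (B.indicator 1) (convStar T σ c (B.indicator 1))
        = (T.r '' B).indicator 1
    ∧ conv T σ (convStar T σ c (B.indicator 1)) (B.indicator 1)
        = (T.s '' B).indicator 1
    -- (e) `1_B 1_B* 1_B = 1_B` and `1_B* 1_B 1_B* = 1_B*`
    ∧ conv T σ (B.indicator 1)
        (conv T σ (convStar T σ c (B.indicator 1)) (B.indicator 1))
        = B.indicator 1
    ∧ conv T σ (convStar T σ c (B.indicator 1))
        (conv T σ (B.indicator 1) (convStar T σ c (B.indicator 1)))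
        = convStar T σ c (B.indicator 1) := by
  classical
  have hG : T.IsGroupoid := hT.toIsGroupoid
  obtain ⟨UB, hBU, -, hrUB, hsUB, -⟩ := hBb
  obtain ⟨UD, hDU, -, hrUD, hsUD, -⟩ := hDb
  have hrB : Set.InjOn T.r B := hrUB.mono hBU
  have hsB : Set.InjOn T.s B := hsUB.mono hBU
  have hrD : Set.InjOn T.r D := hrUD.mono hDU
  have hsD : Set.InjOn T.s D := hsUD.mono hDU
  have ind_ne : ∀ (S : Set G) (a : G), S.indicator (1 : G → R) a ≠ 0 → a ∈ S := by
    intro S a h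
    by_contra hm
    exact h (Set.indicator_of_notMem hm _)
  have c0 : c 0 = 0 := by
    have h := hc.2.1 0 0
    rw [add_zero] at h
    exact left_eq_add.mp h
  -- Part (c)
  have partc : ∀ γ : G, convStar T σ c (B.indicator 1) γ
      = (((σ γ (T.inv γ))⁻¹ : Rˣ) : R) * (T.inv '' B).indicator 1 γ := by
    intro γ
    unfold convStar
    congr 1
    by_cases h : T.inv γ ∈ B
    · have h2 : γ ∈ T.inv '' B := ⟨T.inv γ, h, hG.inv_inv γ⟩
      rw [Set.indicator_of_mem h, Set.indicator_of_mem h2,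
        Pi.one_apply, Pi.one_apply, hc.1]
    · rw [Set.indicator_of_notMem h, Set.indicator_of_notMem, c0]
      rintro ⟨b, hb, rfl⟩
      rw [hG.inv_inv] at h
      exact h hb
  set g : G → R := convStar T σ c (B.indicator 1) with hg
  have gsupp : ∀ b : G, g b ≠ 0 → b ∈ T.inv '' B := by
    intro b h
    by_contra hm
    exact h (by rw [partc, Set.indicator_of_notMem hm, mul_zero])
  have gval : ∀ α ∈ B, g (T.inv α) = (((σ (T.inv α) α)⁻¹ : Rˣ) : R) := by
    intro α hα
    have h2 : T.inv α ∈ T.inv '' B := ⟨α, hα, rfl⟩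
    rw [partc, hG.inv_inv, Set.indicator_of_mem h2, Pi.one_apply, mul_one]
  -- Part (a)
  have parta : ∀ α β, α ∈ B → β ∈ D → T.comp α β →
      conv T σ (B.indicator 1) (D.indicator 1) (T.mul α β) = ((σ α β : Rˣ) : R) := by
    intro α β hα hβ hco
    rw [conv_eq_of_unique σ _ _ hco rfl (by
      intro a b hcab hmab hfa hgb
      have ha : a ∈ B := ind_ne _ _ hfa
      have hb : b ∈ D := ind_ne _ _ hgb
      have h1 : T.r a = T.r α := by
        rw [← hG.r_mul a b hcab, ← hG.r_mul α β hco, hmab]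
      have h2 : T.s b = T.s β := by
        rw [← hG.s_mul a b hcab, ← hG.s_mul α β hco, hmab]
      exact ⟨hrB ha hα h1, hsD hb hβ h2⟩)]
    rw [Set.indicator_of_mem hα, Set.indicator_of_mem hβ, Pi.one_apply, Pi.one_apply,
      mul_one, mul_one]
  -- Part (b)
  have partb : (B ⊆ T.unitSpace ∨ D ⊆ T.unitSpace) →
      conv T σ (B.indicator 1) (D.indicator 1) = (T.setMul B D).indicator 1 := by
    intro hsub
    funext γ
    by_cases hmem : γ ∈ T.setMul B D
    · obtain ⟨α, hα, β, hβ, hco, hmul⟩ := hmem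
      have hone : σ α β = 1 := by
        rcases hsub with h0 | h0
        · have hu : T.s α = α := unit_s hG (h0 hα)
          have : T.r β = α := by rw [← (hG.comp_iff α β).mp hco, hu]
          rw [← this, hσ.norm_left]
        · have hu : T.r β = β := h0 hβ
          have : T.s α = β := by rw [(hG.comp_iff α β).mp hco, hu]
          rw [← this, hσ.norm_right]
      have hm2 : γ ∈ T.setMul B D := ⟨α, hα, β, hβ, hco, hmul⟩
      rw [Set.indicator_of_mem hm2, Pi.one_apply, ← hmul,
        parta α β hα hβ hco, hone, Units.val_one]
    · rw [Set.indicator_of_notMem hmem]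
      refine conv_eq_zero σ _ _ (fun a b hcab hmab => ?_)
      by_contra h
      push_neg at h
      exact hmem ⟨a, ind_ne _ _ h.1, b, ind_ne _ _ h.2, hcab, hmab⟩
  -- Part (d1)
  have partd1 : conv T σ (B.indicator 1) g = (T.r '' B).indicator 1 := by
    funext γ
    by_cases hmem : γ ∈ T.r '' B
    · obtain ⟨α₀, hα₀, hγ⟩ := hmem
      have hmm : T.mul α₀ (T.inv α₀) = γ := hγ
      rw [conv_eq_of_unique σ _ _ (comp_inv_right hG α₀) hmm (by
        intro a b hcab hmab hfa hgb
        have ha : a ∈ B := ind_ne _ _ hfa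
        obtain ⟨δ, hδ, rfl⟩ := gsupp b hgb
        have hsad : T.s a = T.s δ := by
          rw [(hG.comp_iff a (T.inv δ)).mp hcab, hG.r_inv]
        have had : a = δ := hsB ha hδ hsad
        subst had
        have hra : T.r a = γ := hmab
        have : a = α₀ := hrB ha hα₀ (by rw [hra, ← hγ])
        exact ⟨this, by rw [this]⟩)]
      rw [Set.indicator_of_mem hα₀, Pi.one_apply, mul_one, gval α₀ hα₀,
        Set.indicator_of_mem (show γ ∈ T.r '' B from ⟨α₀, hα₀, hγ⟩), Pi.one_apply,
        sigma_inv_comm hG hσ, Units.mul_inv]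
    · rw [Set.indicator_of_notMem hmem]
      refine conv_eq_zero σ _ _ (fun a b hcab hmab => ?_)
      by_contra h
      push_neg at h
      have ha : a ∈ B := ind_ne _ _ h.1
      obtain ⟨δ, hδ, rfl⟩ := gsupp b h.2
      have had : a = δ := hsB ha hδ (by
        rw [(hG.comp_iff a (T.inv δ)).mp hcab, hG.r_inv])
      subst had
      exact hmem ⟨a, ha, hmab⟩
  -- Part (d2)
  have partd2 : conv T σ g (B.indicator 1) = (T.s '' B).indicator 1 := by
    funext γ
    by_cases hmem : γ ∈ T.s '' B
    · obtain ⟨α₀, hα₀, hγ⟩ := hmem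
      have hmm : T.mul (T.inv α₀) α₀ = γ := hγ
      rw [conv_eq_of_unique σ _ _ (comp_inv_left hG α₀) hmm (by
        intro a b hcab hmab hfa hgb
        have hb : b ∈ B := ind_ne _ _ hgb
        obtain ⟨δ, hδ, rfl⟩ := gsupp a hfa
        have hrdb : T.r δ = T.r b := by
          rw [← hG.s_inv δ, (hG.comp_iff (T.inv δ) b).mp hcab]
        have hdb : δ = b := hrB hδ hb hrdb
        subst hdb
        have hsb : T.s δ = γ := hmab
        have : δ = α₀ := hsB hδ hα₀ (by rw [hsb, ← hγ])
        exact ⟨by rw [this], this⟩)]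
      rw [Set.indicator_of_mem hα₀, Pi.one_apply, mul_one, gval α₀ hα₀,
        Set.indicator_of_mem (show γ ∈ T.s '' B from ⟨α₀, hα₀, hγ⟩), Pi.one_apply, Units.mul_inv]
    · rw [Set.indicator_of_notMem hmem]
      refine conv_eq_zero σ _ _ (fun a b hcab hmab => ?_)
      by_contra h
      push_neg at h
      have hb : b ∈ B := ind_ne _ _ h.2
      obtain ⟨δ, hδ, rfl⟩ := gsupp a h.1
      have hdb : δ = b := hrB hδ hb (by
        rw [← hG.s_inv δ, (hG.comp_iff (T.inv δ) b).mp hcab])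
      subst hdb
      exact hmem ⟨δ, hδ, hmab⟩
  -- Part (e1)
  have parte1 : conv T σ (B.indicator 1) (conv T σ g (B.indicator 1)) = B.indicator 1 := by
    rw [partd2]
    funext γ
    by_cases hmem : γ ∈ B
    · rw [conv_eq_of_unique σ _ _ (comp_s_self hG γ) (hG.mul_s_self γ) (by
        intro a b hcab hmab hfa hgb
        have ha : a ∈ B := ind_ne _ _ hfa
        have hb : b ∈ T.s '' B := ind_ne _ _ hgb
        have hbu : b ∈ T.unitSpace := by
          obtain ⟨δ, -, rfl⟩ := hb
          exact hG.s_unit δ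
        have hbs : b = T.s a := by
          rw [(hG.comp_iff a b).mp hcab, unit_r hG hbu]
        subst hbs
        have : a = γ := by rw [← hmab, hG.mul_s_self]
        exact ⟨this, by rw [this]⟩)]
      have h3 : T.s γ ∈ T.s '' B := ⟨γ, hmem, rfl⟩
      rw [Set.indicator_of_mem hmem, Set.indicator_of_mem h3, hσ.norm_right]
      simp
    · rw [Set.indicator_of_notMem hmem]
      refine conv_eq_zero σ _ _ (fun a b hcab hmab => ?_)
      by_contra h
      push_neg at h
      have ha : a ∈ B := ind_ne _ _ h.1
      have hb : b ∈ T.s '' B := ind_ne _ _ h.2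
      have hbu : b ∈ T.unitSpace := by
        obtain ⟨δ, -, rfl⟩ := hb
        exact hG.s_unit δ
      have hbs : b = T.s a := by
        rw [(hG.comp_iff a b).mp hcab, unit_r hG hbu]
      subst hbs
      rw [hG.mul_s_self] at hmab
      exact hmem (hmab ▸ ha)
  -- Part (e2)
  have parte2 : conv T σ g (conv T σ (B.indicator 1) g) = g := by
    rw [partd1]
    funext γ
    by_cases hmem : γ ∈ T.inv '' B
    · rw [conv_eq_of_unique σ _ _ (comp_s_self hG γ) (hG.mul_s_self γ) (by
        intro a b hcab hmab hfa hgb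
        have ha : a ∈ T.inv '' B := gsupp a hfa
        have hbu : b ∈ T.unitSpace := by
          obtain ⟨δ, -, rfl⟩ := ind_ne _ _ hgb
          exact hG.r_unit δ
        have hbs : b = T.s a := by
          rw [(hG.comp_iff a b).mp hcab, unit_r hG hbu]
        subst hbs
        have : a = γ := by rw [← hmab, hG.mul_s_self]
        exact ⟨this, by rw [this]⟩)]
      obtain ⟨α, hα, hγ⟩ := hmem
      have hsγ : T.s γ ∈ T.r '' B := ⟨α, hα, by rw [← hγ, hG.s_inv]⟩
      rw [Set.indicator_of_mem hsγ, Pi.one_apply, mul_one, hσ.norm_right,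
        Units.val_one, one_mul]
    · have hzero : g γ = 0 := by
        rw [partc, Set.indicator_of_notMem hmem, mul_zero]
      rw [hzero]
      refine conv_eq_zero σ _ _ (fun a b hcab hmab => ?_)
      by_contra h
      push_neg at h
      have ha : a ∈ T.inv '' B := gsupp a h.1
      have hbu : b ∈ T.unitSpace := by
        obtain ⟨δ, -, rfl⟩ := ind_ne _ _ h.2
        exact hG.r_unit δ
      have hbs : b = T.s a := by
        rw [(hG.comp_iff a b).mp hcab, unit_r hG hbu]
      subst hbs
      rw [hG.mul_s_self] at hmab
      exact hmem (hmab ▸ ha)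
  exact ⟨parta, partb, partc, partd1, partd2, parte1, parte2⟩
end TwistedSteinberg
end

section
/- Let G be an ample Hausdorff groupoid and let σ, τ : G^(2) → T ≤ R^× be continuous 2-cocycles that are cohomologous. Then the map θ(f) = bf (pointwise product with the cobounding function b) is an R-algebra isomorphism from A_R(G,σ) onto A_R(G,τ). If R has a T-inverse involution, then θ is a *-isomorphism. -/
/-!
Common definitions: topological groupoids, bisections, étale/ample groupoids,
continuous `Rˣ`-valued 2-cocycles, and twisted Steinberg algebras.

A groupoid is modelled as a type `G` together with a composability predicate
`comp`, a (partial, junk-valued off composable pairs) multiplication `mul`,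
and an inversion `inv`.  The range and source maps are `r γ = γ γ⁻¹` and
`s γ = γ⁻¹ γ`, and the unit space is the set of fixed points of `r`.
-/

namespace TwistedSteinberg

open GroupoidStruct

/-- `σ` and `τ` (valued in `Tsub ≤ Rˣ`) are cohomologous via the continuous
function `b : G → Rˣ` taking values in `Tsub`. -/
def CohomologousUnitsVia {G R : Type*} [TopologicalSpace G] [CommRing R]
    [TopologicalSpace R] (T : GroupoidStruct G) (Tsub : Subgroup Rˣ)
    (σ τ : G → G → Rˣ) (b : G → Rˣ) : Prop :=
  (∀ γ, b γ ∈ Tsub) ∧ Continuous (fun γ : G => ((b γ : Rˣ) : R)) ∧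
    (∀ x ∈ T.unitSpace, b x = 1) ∧
    ∀ α β, T.comp α β → σ α β * (τ α β)⁻¹ = b α * b β * (b (T.mul α β))⁻¹

/-!
Since `R` is discrete, `b` is locally constant, so multiplication by `b` preserves locally
constant compactly supported functions and is inverted by multiplication by `b⁻¹`. The coboundary
identity `b(αβ) σ(α,β) = τ(α,β) b(α) b(β)` makes it intertwine the twisted convolutions term by
term; at `β = α⁻¹`, where `b(αα⁻¹) = 1`, it becomes `σ(α,α⁻¹) = τ(α,α⁻¹) b(α) b(α⁻¹)`, which
together with `c(b) = b⁻¹` on `T` gives compatibility with the involutions.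
-/

open GroupoidStruct

theorem Units.val_mul_finsum {α : Sort*} {R : Type*} [Semiring R] (u : Rˣ) (f : α → R) :
    (u : R) * ∑ᶠ i, f i = ∑ᶠ i, (u : R) * f i :=
  (AddMonoidHom.mulLeft (u : R)).map_finsum_of_injective u.isUnit.mul_right_injective f

namespace CohomologousUnitsVia

variable {G R : Type*} [TopologicalSpace G] [CommRing R] [TopologicalSpace R]
  {T : GroupoidStruct G} {Tsub : Subgroup Rˣ} {σ τ : G → G → Rˣ} {b : G → Rˣ}

theorem isLocallyConstant [DiscreteTopology R] (hb : CohomologousUnitsVia T Tsub σ τ b) :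
    IsLocallyConstant b :=
  .desc b Units.val ((IsLocallyConstant.iff_continuous _).2 hb.2.1) Units.val_injective

theorem mul_cocycle (hb : CohomologousUnitsVia T Tsub σ τ b) {α β : G} (h : T.comp α β) :
    b (T.mul α β) * σ α β = τ α β * b α * b β := by
  have hσ := hb.2.2.2 α β h
  rw [mul_inv_eq_iff_eq_mul] at hσ
  rw [hσ]
  simp [mul_comm, mul_left_comm]

theorem cocycle_inv (hb : CohomologousUnitsVia T Tsub σ τ b) (hT : T.IsGroupoid) (γ : G) :
    σ γ (T.inv γ) = τ γ (T.inv γ) * b γ * b (T.inv γ) := by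
  have hcomp : T.comp γ (T.inv γ) := (hT.comp_iff γ (T.inv γ)).2 (hT.r_inv γ).symm
  have hr : b (T.mul γ (T.inv γ)) = 1 := hb.2.2.1 _ (hT.r_unit γ)
  simpa [hr] using hb.mul_cocycle hcomp

end CohomologousUnitsVia

section UnitsMul

variable {G R : Type*} [CommRing R] {T : GroupoidStruct G} {σ τ : G → G → Rˣ} {u : G → Rˣ}

theorem unitsMul_conv (hu : ∀ α β, T.comp α β → u (T.mul α β) * σ α β = τ α β * u α * u β)
    (f g : G → R) (γ : G) :
    (u γ : R) * conv T σ f g γ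
      = conv T τ (fun γ => (u γ : R) * f γ) (fun γ => (u γ : R) * g γ) γ := by
  simp only [conv, Units.val_mul_finsum]
  refine finsum_congr fun p => finsum_congr fun ⟨hcomp, hγ⟩ => ?_
  subst hγ
  have hu' := congrArg Units.val (hu p.1 p.2 hcomp)
  push_cast at hu'
  linear_combination (f p.1 * g p.2) * hu'

theorem unitsMul_convStar {Tsub : Subgroup Rˣ} (huT : ∀ γ, u γ ∈ Tsub)
    (hu : ∀ γ, σ γ (T.inv γ) = τ γ (T.inv γ) * u γ * u (T.inv γ))
    {c : R → R} (hc : IsTInverseInvolution Tsub c) (f : G → R) (γ : G) :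
    (u γ : R) * convStar T σ c f γ = convStar T τ c (fun γ => (u γ : R) * f γ) γ := by
  obtain ⟨-, -, hc_mul, -, hc_inv⟩ := hc
  simp only [convStar, hc_mul, hc_inv _ (huT _), hu, mul_inv, Units.val_mul]
  linear_combination (((τ γ (T.inv γ))⁻¹ : Rˣ) : R) * (((u (T.inv γ))⁻¹ : Rˣ) : R) *
    c (f (T.inv γ)) * (u γ).mul_inv

variable [TopologicalSpace G]

theorem mul_mem_steinbergCarrier {v f : G → R} (hv : IsLocallyConstant v)
    (hf : f ∈ steinbergCarrier G R) : v * f ∈ steinbergCarrier G R := by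
  obtain ⟨hf_lc, hf_cpt⟩ := hf
  have hvf_lc : IsLocallyConstant (v * f) := hv.mul hf_lc
  have hvf_closed : IsClosed (Function.support (v * f)) :=
    (hvf_lc.isClopen_fiber 0).isOpen.isClosed_compl
  exact ⟨hvf_lc, hf_cpt.of_isClosed_subset hvf_closed (Function.support_mul_subset_right v f)⟩

theorem bijOn_unitsMul_steinbergCarrier (hu : IsLocallyConstant u) :
    Set.BijOn (fun f γ => (u γ : R) * f γ) (steinbergCarrier G R) (steinbergCarrier G R) :=
  Set.InvOn.bijOn
    ⟨fun f _ => funext fun γ => Units.inv_mul_cancel_left (u γ) (f γ),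
      fun f _ => funext fun γ => Units.mul_inv_cancel_left (u γ) (f γ)⟩
    (fun _ => mul_mem_steinbergCarrier (hu.comp Units.val))
    (fun _ => mul_mem_steinbergCarrier (hu.comp fun v => ((v⁻¹ : Rˣ) : R)))

end UnitsMul

theorem cohomologous_twistedSteinbergAlgebras_isomorphic_general
    {G R : Type*} [TopologicalSpace G]
    [CommRing R] [TopologicalSpace R] [DiscreteTopology R]
    (T : GroupoidStruct G) (hT : T.IsTopGroupoid)
    (Tsub : Subgroup Rˣ)
    (σ τ : G → G → Rˣ)
    (b : G → Rˣ) (hb : CohomologousUnitsVia T Tsub σ τ b) :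
    -- `θ` maps `A_R(G,σ)` into `A_R(G,τ)` (they agree as `R`-modules)
    (∀ f ∈ steinbergCarrier G R,
        (fun γ => ((b γ : Rˣ) : R) * f γ) ∈ steinbergCarrier G R)
    -- `θ` is a bijection of `A_R(G,σ)` onto `A_R(G,τ)`
    ∧ Set.BijOn (fun (f : G → R) => fun γ => ((b γ : Rˣ) : R) * f γ)
        (steinbergCarrier G R) (steinbergCarrier G R)
    -- `θ` is `R`-linear
    ∧ (∀ f g : G → R, (fun γ => ((b γ : Rˣ) : R) * (f + g) γ)
        = (fun γ => ((b γ : Rˣ) : R) * f γ) + fun γ => ((b γ : Rˣ) : R) * g γ)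
    ∧ (∀ (a : R) (f : G → R), (fun γ => ((b γ : Rˣ) : R) * (a • f) γ)
        = a • fun γ => ((b γ : Rˣ) : R) * f γ)
    -- `θ` intertwines the twisted convolutions
    ∧ (∀ f g, f ∈ steinbergCarrier G R → g ∈ steinbergCarrier G R →
        (fun γ => ((b γ : Rˣ) : R) * conv T σ f g γ)
          = conv T τ (fun γ => ((b γ : Rˣ) : R) * f γ)
              (fun γ => ((b γ : Rˣ) : R) * g γ))
    -- if `R` has a `T`-inverse involution, `θ` is a `*`-isomorphism
    ∧ (∀ c : R → R, IsTInverseInvolution Tsub c →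
        ∀ f ∈ steinbergCarrier G R,
          (fun γ => ((b γ : Rˣ) : R) * convStar T σ c f γ)
            = convStar T τ c fun γ => ((b γ : Rˣ) : R) * f γ) := by
  have hb_lc := hb.isLocallyConstant
  exact ⟨fun _ => mul_mem_steinbergCarrier (hb_lc.comp Units.val),
    bijOn_unitsMul_steinbergCarrier hb_lc,
    fun _ _ => funext fun _ => mul_add _ _ _,
    fun _ _ => funext fun _ => mul_left_comm _ _ _,
    fun f g _ _ => funext (unitsMul_conv (fun _ _ => hb.mul_cocycle) f g),
    fun _ hc f _ => funext (unitsMul_convStar hb.1 (hb.cocycle_inv hT.toIsGroupoid) hc f)⟩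

/-- If the continuous 2-cocycles `σ, τ : G⁽²⁾ → Tsub ≤ Rˣ`
on an ample Hausdorff groupoid `G` are cohomologous via `b`, then
`θ(f) = b f` (pointwise product) is an `R`-algebra isomorphism from
`A_R(G, σ)` onto `A_R(G, τ)`; if `R` has a `T`-inverse involution `c`, then
`θ` is a `*`-isomorphism. -/
theorem cohomologous_twistedSteinbergAlgebras_isomorphic
    {G R : Type*} [TopologicalSpace G] [T2Space G] [LocallyCompactSpace G]
    [CommRing R] [TopologicalSpace R] [DiscreteTopology R]
    (T : GroupoidStruct G) (hT : T.IsTopGroupoid) (hample : T.IsAmple)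
    (Tsub : Subgroup Rˣ)
    (σ τ : G → G → Rˣ) (hσ : IsCocycle (R := R) T σ) (hτ : IsCocycle (R := R) T τ)
    (hσT : ∀ a b, σ a b ∈ Tsub) (hτT : ∀ a b, τ a b ∈ Tsub)
    (b : G → Rˣ) (hb : CohomologousUnitsVia T Tsub σ τ b) :
    -- `θ` maps `A_R(G,σ)` into `A_R(G,τ)` (they agree as `R`-modules)
    (∀ f ∈ steinbergCarrier G R,
        (fun γ => ((b γ : Rˣ) : R) * f γ) ∈ steinbergCarrier G R)
    -- `θ` is a bijection of `A_R(G,σ)` onto `A_R(G,τ)`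
    ∧ Set.BijOn (fun (f : G → R) => fun γ => ((b γ : Rˣ) : R) * f γ)
        (steinbergCarrier G R) (steinbergCarrier G R)
    -- `θ` is `R`-linear
    ∧ (∀ f g : G → R, (fun γ => ((b γ : Rˣ) : R) * (f + g) γ)
        = (fun γ => ((b γ : Rˣ) : R) * f γ) + fun γ => ((b γ : Rˣ) : R) * g γ)
    ∧ (∀ (a : R) (f : G → R), (fun γ => ((b γ : Rˣ) : R) * (a • f) γ)
        = a • fun γ => ((b γ : Rˣ) : R) * f γ)
    -- `θ` intertwines the twisted convolutions
    ∧ (∀ f g, f ∈ steinbergCarrier G R → g ∈ steinbergCarrier G R →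
        (fun γ => ((b γ : Rˣ) : R) * conv T σ f g γ)
          = conv T τ (fun γ => ((b γ : Rˣ) : R) * f γ)
              (fun γ => ((b γ : Rˣ) : R) * g γ))
    -- if `R` has a `T`-inverse involution, `θ` is a `*`-isomorphism
    ∧ (∀ c : R → R, IsTInverseInvolution Tsub c →
        ∀ f ∈ steinbergCarrier G R,
          (fun γ => ((b γ : Rˣ) : R) * convStar T σ c f γ)
            = convStar T τ c fun γ => ((b γ : Rˣ) : R) * f γ) :=
  cohomologous_twistedSteinbergAlgebras_isomorphic_general T hT Tsub σ τ b hb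

end TwistedSteinberg
end

section
/- Let G be a Hausdorff étale groupoid and let (Σ, i, q) be a discrete twist by T ≤ R^× over G that admits a continuous global section P : G → Σ. Then P preserves composability, and there is a unique continuous 2-cocycle σ : G^(2) → T satisfying P(α)P(β)P(αβ)^{-1} = i(r(α), σ(α,β)) for all composable (α,β) ∈ G^(2); moreover σ is normalised, i.e. σ(r(γ),γ) = 1 = σ(γ,s(γ)) for all γ ∈ G. -/
/-!
Common definitions: topological groupoids, bisections, étale/ample groupoids,
continuous `Rˣ`-valued 2-cocycles, and twisted Steinberg algebras.

A groupoid is modelled as a type `G` together with a composability predicate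
`comp`, a (partial, junk-valued off composable pairs) multiplication `mul`,
and an inversion `inv`.  The range and source maps are `r γ = γ γ⁻¹` and
`s γ = γ⁻¹ γ`, and the unit space is the set of fixed points of `r`.
-/

namespace TwistedSteinberg

open GroupoidStruct

/-- A continuous global section `P : G → Σ` of a discrete
twist `(Σ, i, q)` by `Tsub ≤ Rˣ` over a Hausdorff étale groupoid `G`
preserves composability and induces a unique continuous 2-cocycle
`σ : G⁽²⁾ → Tsub` with `P(α)P(β)P(αβ)⁻¹ = i(r(α), σ(α,β))`; moreover `σ` is
normalised. -/
theorem globalSection_induces_unique_cocycle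
    {G S R : Type*} [TopologicalSpace G] [TopologicalSpace S]
    [T2Space G] [LocallyCompactSpace G]
    [CommRing R] [TopologicalSpace R] [DiscreteTopology R]
    (TG : GroupoidStruct G) (hTG : TG.IsTopGroupoid) (hetale : TG.IsEtale)
    (TS : GroupoidStruct S) (Tsub : Subgroup Rˣ)
    (i : G → Tsub → S) (q : S → G)
    (hTw : IsDiscreteTwist TG TS Tsub i q)
    (P : G → S) (hP : IsGlobalSection TG TS q P) :
    -- `P` preserves composability
    (∀ α β, TG.comp α β → TS.comp (P α) (P β))
    -- there is an induced continuous 2-cocycle `σ`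
    ∧ ∃ σ : G → G → Tsub,
        (ContinuousOn (fun p : G × G => ((σ p.1 p.2 : Rˣ) : R))
            {p : G × G | TG.comp p.1 p.2}
          ∧ (∀ a b c, TG.comp a b → TG.comp b c →
              σ a b * σ (TG.mul a b) c = σ a (TG.mul b c) * σ b c)
          ∧ InducesCocycle TG TS i P σ)
        -- `σ` is normalised
        ∧ (∀ γ : G, σ (TG.r γ) γ = 1 ∧ σ γ (TG.s γ) = 1)
        -- `σ` is the unique such cocycle (on composable pairs)
        ∧ ∀ σ' : G → G → Tsub,
            (ContinuousOn (fun p : G × G => ((σ' p.1 p.2 : Rˣ) : R))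
                {p : G × G | TG.comp p.1 p.2}
              ∧ (∀ a b c, TG.comp a b → TG.comp b c →
                  σ' a b * σ' (TG.mul a b) c = σ' a (TG.mul b c) * σ' b c)
              ∧ InducesCocycle TG TS i P σ') →
            ∀ α β, TG.comp α β → σ' α β = σ α β := by
  classical
  obtain ⟨hPc, hPq, hPu⟩ := hP
  have hG := hTG.toIsGroupoid
  have hS := hTw.topS.toIsGroupoid
  have hrmem : ∀ γ : G, TG.r γ ∈ TG.unitSpace := hG.r_unit
  have hScompPinv : ∀ ε : S, TS.comp ε (TS.inv ε) := fun ε => by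
    rw [hS.comp_iff, hS.r_inv]
  have hScompinvP : ∀ ε : S, TS.comp (TS.inv ε) ε := fun ε => by
    rw [hS.comp_iff, hS.s_inv]
  have hGcompinv : ∀ γ : G, TG.comp γ (TG.inv γ) := fun γ => by
    rw [hG.comp_iff, hG.r_inv]
  have hsr : ∀ γ : G, TG.s (TG.r γ) = TG.r γ := fun γ => by
    have h := hG.s_mul γ (TG.inv γ) (hGcompinv γ)
    rw [hG.s_inv] at h
    exact h
  have hrs : ∀ γ : G, TG.r (TG.s γ) = TG.s γ := fun γ => hG.s_unit γ
  have hqr : ∀ ε : S, q (TS.r ε) = TG.r (q ε) := fun ε => by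
    show q (TS.mul ε (TS.inv ε)) = TG.mul (q ε) (TG.inv (q ε))
    rw [hTw.q_mul ε (TS.inv ε) (hScompPinv ε), hTw.q_inv]
  have hqs : ∀ ε : S, q (TS.s ε) = TG.s (q ε) := fun ε => by
    show q (TS.mul (TS.inv ε) ε) = TG.mul (TG.inv (q ε)) (q ε)
    rw [hTw.q_mul (TS.inv ε) ε (hScompinvP ε), hTw.q_inv]
  have hrgen : ∀ ε : S, TS.r ε = i (TG.r (q ε)) 1 := fun ε => by
    have h := hTw.i_q_unit (TS.r ε) (hS.r_unit ε)
    rw [hqr] at h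
    exact h.symm
  have hrP : ∀ γ : G, TS.r (P γ) = i (TG.r γ) 1 := fun γ => by
    have h := hrgen (P γ)
    rwa [hPq] at h
  have hsP : ∀ γ : G, TS.s (P γ) = i (TG.s γ) 1 := fun γ => by
    have h := hTw.i_q_unit (TS.s (P γ)) (hS.s_unit (P γ))
    rw [hqs, hPq] at h
    exact h.symm
  have hPcomp : ∀ α β, TG.comp α β → TS.comp (P α) (P β) := fun α β h => by
    rw [hS.comp_iff, hsP, hrP, (hG.comp_iff α β).mp h]
  have hiP : ∀ (γ : G) (z : Tsub), TS.comp (i (TG.r γ) z) (P γ) := fun γ z => by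
    have h := hTw.central_comp_left (P γ) z
    rwa [hPq] at h
  have hPunit : ∀ x ∈ TG.unitSpace, P x = i x 1 := fun x hx => by
    have h := hTw.i_q_unit (P x) (hPu x hx)
    rw [hPq] at h
    exact h.symm
  -- cancellation of a common right factor against `i`-elements
  have hcancel : ∀ (ε : S) (z w : Tsub),
      TS.mul (i (TG.r (q ε)) z) ε = TS.mul (i (TG.r (q ε)) w) ε → z = w := by
    intro ε z w heq
    have hx : TG.r (q ε) ∈ TG.unitSpace := hrmem (q ε)
    have key : ∀ u : Tsub, TS.mul (TS.mul (i (TG.r (q ε)) u) ε) (TS.inv ε)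
        = i (TG.r (q ε)) u := by
      intro u
      rw [hS.assoc _ _ _ (hTw.central_comp_left ε u) (hScompPinv ε)]
      show TS.mul (i (TG.r (q ε)) u) (TS.r ε) = _
      rw [hrgen ε, hTw.i_mul _ hx u 1, mul_one]
    have h2 : i (TG.r (q ε)) z = i (TG.r (q ε)) w := by
      rw [← key z, ← key w, heq]
    exact (hTw.i_injective _ hx _ hx z w h2).2
  have hXYcomp : ∀ α β, TG.comp α β →
      TS.comp (TS.mul (P α) (P β)) (TS.inv (P (TG.mul α β))) := by
    intro α β h
    rw [hS.comp_iff, hS.s_mul _ _ (hPcomp α β h), hS.r_inv, hsP, hsP,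
      hG.s_mul α β h]
  have hqPP : ∀ α β, TG.comp α β → q (TS.mul (P α) (P β)) = TG.mul α β := by
    intro α β h
    rw [hTw.q_mul _ _ (hPcomp α β h), hPq, hPq]
  have key : ∀ α β, ∃ z : Tsub, TG.comp α β →
      TS.mul (TS.mul (P α) (P β)) (TS.inv (P (TG.mul α β))) = i (TG.r α) z := by
    intro α β
    by_cases h : TG.comp α β
    · have hmem : q (TS.mul (TS.mul (P α) (P β)) (TS.inv (P (TG.mul α β))))
          = TG.r α := by
        rw [hTw.q_mul _ _ (hXYcomp α β h), hTw.q_inv, hqPP α β h, hPq]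
        show TG.r (TG.mul α β) = TG.r α
        exact hG.r_mul α β h
      obtain ⟨z, hz⟩ := (hTw.exact_fibre (TG.r α) (hrmem α) _).mp hmem
      exact ⟨z, fun _ => hz⟩
    · exact ⟨1, fun h' => absurd h' h⟩
  choose σ hσ using key
  -- the key multiplicative relation
  have hmulP : ∀ α β, TG.comp α β →
      TS.mul (P α) (P β) = TS.mul (i (TG.r α) (σ α β)) (P (TG.mul α β)) := by
    intro α β h
    have hs1 : TS.s (TS.mul (P α) (P β)) = TS.s (P (TG.mul α β)) := by
      rw [hS.s_mul _ _ (hPcomp α β h), hsP, hsP, hG.s_mul α β h]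
    conv_lhs => rw [← hS.mul_s_self (TS.mul (P α) (P β)), hs1]
    show TS.mul (TS.mul (P α) (P β))
        (TS.mul (TS.inv (P (TG.mul α β))) (P (TG.mul α β))) = _
    rw [← hS.assoc _ _ _ (hXYcomp α β h) (hScompinvP _), hσ α β h]
  -- the cocycle identity
  have hcoc : ∀ a b c, TG.comp a b → TG.comp b c →
      σ a b * σ (TG.mul a b) c = σ a (TG.mul b c) * σ b c := by
    intro a b c hab hbc
    have hab_c : TG.comp (TG.mul a b) c := by
      rw [hG.comp_iff, hG.s_mul a b hab]
      exact (hG.comp_iff b c).mp hbc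
    have ha_bc : TG.comp a (TG.mul b c) := by
      rw [hG.comp_iff, hG.r_mul b c hbc]
      exact (hG.comp_iff a b).mp hab
    have c1 : TS.comp (i (TG.r a) (σ a b)) (P (TG.mul a b)) := by
      have h := hiP (TG.mul a b) (σ a b)
      rwa [hG.r_mul a b hab] at h
    have cii : TS.comp (i (TG.r a) (σ a b)) (i (TG.r a) (σ (TG.mul a b) c)) :=
      hTw.i_comp _ (hrmem a) _ _
    have ciP : TS.comp (i (TG.r a) (σ a b * σ (TG.mul a b) c))
        (P (TG.mul (TG.mul a b) c)) := by
      have h := hiP (TG.mul (TG.mul a b) c) (σ a b * σ (TG.mul a b) c)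
      rwa [hG.r_mul _ _ hab_c, hG.r_mul a b hab] at h
    have e1 : TS.mul (TS.mul (P a) (P b)) (P c)
        = TS.mul (i (TG.r a) (σ a b * σ (TG.mul a b) c))
            (P (TG.mul (TG.mul a b) c)) := by
      rw [hmulP a b hab, hS.assoc _ _ _ c1 (hPcomp _ _ hab_c),
        hmulP (TG.mul a b) c hab_c, hG.r_mul a b hab,
        ← hS.assoc _ _ _ (hTw.i_comp _ (hrmem a) (σ a b) (σ (TG.mul a b) c))
          (by have h := hiP (TG.mul (TG.mul a b) c) (σ (TG.mul a b) c)
              rwa [hG.r_mul _ _ hab_c, hG.r_mul a b hab] at h),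
        hTw.i_mul _ (hrmem a)]
    have hab' : TG.s a = TG.r b := (hG.comp_iff a b).mp hab
    have hcenA : TS.mul (P a) (i (TG.r b) (σ b c))
        = TS.mul (i (TG.r a) (σ b c)) (P a) := by
      have h := hTw.central (P a) (σ b c)
      rw [hPq, hab'] at h
      exact h.symm
    have cPai : TS.comp (P a) (i (TG.r b) (σ b c)) := by
      have h := hTw.central_comp_right (P a) (σ b c)
      rwa [hPq, hab'] at h
    have ciPbc : TS.comp (i (TG.r b) (σ b c)) (P (TG.mul b c)) := by
      have h := hiP (TG.mul b c) (σ b c)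
      rwa [hG.r_mul b c hbc] at h
    have ciPabc : TS.comp (i (TG.r a) (σ b c * σ a (TG.mul b c)))
        (P (TG.mul a (TG.mul b c))) := by
      have h := hiP (TG.mul a (TG.mul b c)) (σ b c * σ a (TG.mul b c))
      rwa [hG.r_mul a _ ha_bc] at h
    have e2 : TS.mul (TS.mul (P a) (P b)) (P c)
        = TS.mul (i (TG.r a) (σ b c * σ a (TG.mul b c)))
            (P (TG.mul (TG.mul a b) c)) := by
      rw [hS.assoc _ _ _ (hPcomp a b hab) (hPcomp b c hbc), hmulP b c hbc,
        ← hS.assoc _ _ _ cPai ciPbc, hcenA,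
        hS.assoc _ _ _ (hiP a (σ b c)) (hPcomp a (TG.mul b c) ha_bc),
        hmulP a (TG.mul b c) ha_bc,
        ← hS.assoc _ _ _ (hTw.i_comp _ (hrmem a) (σ b c) (σ a (TG.mul b c)))
          (by have h := hiP (TG.mul a (TG.mul b c)) (σ a (TG.mul b c))
              rwa [hG.r_mul a _ ha_bc] at h),
        hTw.i_mul _ (hrmem a), hG.assoc a b c hab hbc]
    have e3 := e1.symm.trans e2
    have hq' : TG.r a = TG.r (q (P (TG.mul (TG.mul a b) c))) := by
      rw [hPq, hG.r_mul _ _ hab_c, hG.r_mul a b hab]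
    rw [hq'] at e3
    have h := hcancel _ _ _ e3
    rw [mul_comm (σ b c)] at h
    exact h
  -- unit step used for normalisation
  have hstep : ∀ γ : G, TS.mul (i (TG.r γ) 1) (TS.mul (P γ) (TS.inv (P γ)))
      = i (TG.r γ) 1 := by
    intro γ
    show TS.mul (i (TG.r γ) 1) (TS.r (P γ)) = _
    rw [hrP γ, hTw.i_mul _ (hrmem γ) 1 1, mul_one]
  have hnorm : ∀ γ : G, σ (TG.r γ) γ = 1 ∧ σ γ (TG.s γ) = 1 := by
    intro γ
    have hrr : TG.r (TG.r γ) = TG.r γ := hG.r_unit γ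
    constructor
    · have hcomp : TG.comp (TG.r γ) γ := by
        rw [hG.comp_iff]; exact hsr γ
      have h := hσ (TG.r γ) γ hcomp
      rw [hG.r_mul_self γ, hPunit (TG.r γ) (hrmem γ),
        hS.assoc _ _ _ (hiP γ 1) (hScompPinv (P γ)), hstep γ, hrr] at h
      exact (hTw.i_injective _ (hrmem γ) _ (hrmem γ) _ _ h.symm).2
    · have hcomp : TG.comp γ (TG.s γ) := by
        rw [hG.comp_iff]; exact (hrs γ).symm
      have h := hσ γ (TG.s γ) hcomp
      have hcen : TS.mul (P γ) (i (TG.s γ) 1) = TS.mul (i (TG.r γ) 1) (P γ) := by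
        have hc := hTw.central (P γ) 1
        rw [hPq] at hc
        exact hc.symm
      rw [hG.mul_s_self γ, hPunit (TG.s γ) (hG.s_unit γ), hcen,
        hS.assoc _ _ _ (hiP γ 1) (hScompPinv (P γ)), hstep γ] at h
      exact (hTw.i_injective _ (hrmem γ) _ (hrmem γ) _ _ h.symm).2
  -- continuity of σ
  have hcont : ContinuousOn (fun p : G × G => ((σ p.1 p.2 : Rˣ) : R))
      {p : G × G | TG.comp p.1 p.2} := by
    intro p₀ hp₀
    have hp₀' : TG.comp p₀.1 p₀.2 := hp₀
    obtain ⟨B, hγ₀B, hBopen, hbis, Q, hQcont, hQsec, hQbij, hQc2, hQopen⟩ :=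
      hTw.locally_trivial (TG.mul p₀.1 p₀.2)
    have hqΦ : ∀ γ ∈ B, ∀ z : Tsub, q (TS.mul (i (TG.r γ) z) (Q γ)) = γ := by
      intro γ hγ z
      have hc := hTw.central_comp_left (Q γ) z
      rw [hQsec γ hγ] at hc
      rw [hTw.q_mul _ _ hc, hTw.q_i _ (hrmem γ), hQsec γ hγ, hG.r_mul_self γ]
    have hEmem : TS.mul (P p₀.1) (P p₀.2) ∈ q ⁻¹' B := by
      simp only [Set.mem_preimage]
      rw [hqPP p₀.1 p₀.2 hp₀']
      exact hγ₀B
    obtain ⟨⟨γc, c⟩, hγc, hceq⟩ := hQbij.surjOn hEmem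
    have hPmem : P (TG.mul p₀.1 p₀.2) ∈ q ⁻¹' B := by
      simp only [Set.mem_preimage, hPq]; exact hγ₀B
    obtain ⟨⟨γd, d⟩, hγd, hdeq⟩ := hQbij.surjOn hPmem
    have hWcopen : IsOpen ((fun pr : G × Tsub =>
        TS.mul (i (TG.r pr.1) pr.2) (Q pr.1)) '' (B ×ˢ ({c} : Set Tsub))) :=
      hQopen _ (fun x hx => ⟨hx.1, trivial⟩) (hBopen.prod (isOpen_discrete _))
    have hWdopen : IsOpen ((fun pr : G × Tsub =>
        TS.mul (i (TG.r pr.1) pr.2) (Q pr.1)) '' (B ×ˢ ({d} : Set Tsub))) :=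
      hQopen _ (fun x hx => ⟨hx.1, trivial⟩) (hBopen.prod (isOpen_discrete _))
    have hEWc : TS.mul (P p₀.1) (P p₀.2) ∈ (fun pr : G × Tsub =>
        TS.mul (i (TG.r pr.1) pr.2) (Q pr.1)) '' (B ×ˢ ({c} : Set Tsub)) :=
      ⟨(γc, c), ⟨hγc.1, rfl⟩, hceq⟩
    have hPWd : P (TG.mul p₀.1 p₀.2) ∈ (fun pr : G × Tsub =>
        TS.mul (i (TG.r pr.1) pr.2) (Q pr.1)) '' (B ×ˢ ({d} : Set Tsub)) :=
      ⟨(γd, d), ⟨hγd.1, rfl⟩, hdeq⟩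
    -- the local constancy claim
    have hclaim : ∀ p : G × G, TG.comp p.1 p.2 → TG.mul p.1 p.2 ∈ B →
        TS.mul (P p.1) (P p.2) ∈ (fun pr : G × Tsub =>
          TS.mul (i (TG.r pr.1) pr.2) (Q pr.1)) '' (B ×ˢ ({c} : Set Tsub)) →
        P (TG.mul p.1 p.2) ∈ (fun pr : G × Tsub =>
          TS.mul (i (TG.r pr.1) pr.2) (Q pr.1)) '' (B ×ˢ ({d} : Set Tsub)) →
        σ p.1 p.2 = c * d⁻¹ := by
      rintro ⟨α, β⟩ hp hmB ⟨⟨γ1, c1⟩, ⟨hγ1B, hc1⟩, hE1⟩ ⟨⟨γ2, d1⟩, ⟨hγ2B, hd1⟩, hP1⟩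
      obtain rfl : c = c1 := hc1.symm
      obtain rfl : d = d1 := hd1.symm
      have hE1' : TS.mul (i (TG.r γ1) c) (Q γ1) = TS.mul (P α) (P β) := hE1
      have hP1' : TS.mul (i (TG.r γ2) d) (Q γ2) = P (TG.mul α β) := hP1
      have hq1 : γ1 = TG.mul α β := by
        have h := congrArg q hE1'
        rwa [hqΦ γ1 hγ1B, hqPP α β hp] at h
      have hq2 : γ2 = TG.mul α β := by
        have h := congrArg q hP1'
        rwa [hqΦ γ2 hγ2B, hPq] at h
      subst hq1; subst hq2
      have cii : TS.comp (i (TG.r α) (σ α β)) (i (TG.r α) d) :=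
        hTw.i_comp _ (hrmem α) _ _
      have ciQ : TS.comp (i (TG.r α) d) (Q (TG.mul α β)) := by
        have h := hTw.central_comp_left (Q (TG.mul α β)) d
        rwa [hQsec _ hmB, hG.r_mul α β hp] at h
      have hm := hmulP α β hp
      rw [← hP1'] at hm
      rw [hG.r_mul α β hp] at hm hE1'
      rw [← hS.assoc _ _ _ cii ciQ, hTw.i_mul _ (hrmem α)] at hm
      have heq : TS.mul (i (TG.r α) (σ α β * d)) (Q (TG.mul α β))
          = TS.mul (i (TG.r α) c) (Q (TG.mul α β)) := by
        rw [← hm, hE1']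
      have hx : TG.r α = TG.r (q (Q (TG.mul α β))) := by
        rw [hQsec _ hmB]
        exact (hG.r_mul α β hp).symm
      rw [hx] at heq
      exact eq_mul_inv_of_mul_eq (hcancel _ _ _ heq)
    -- eventual facts
    have hmcont : ContinuousWithinAt (fun p : G × G => TG.mul p.1 p.2)
        {p : G × G | TG.comp p.1 p.2} p₀ := hTG.continuousOn_mul p₀ hp₀
    have hPP : ContinuousWithinAt (fun p : G × G => TS.mul (P p.1) (P p.2))
        {p : G × G | TG.comp p.1 p.2} p₀ := by
      have h1 : ContinuousWithinAt (fun p : G × G => (P p.1, P p.2))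
          {p : G × G | TG.comp p.1 p.2} p₀ :=
        ((hPc.comp continuous_fst).prodMk (hPc.comp continuous_snd)).continuousWithinAt
      exact ContinuousWithinAt.comp
        (hTw.topS.continuousOn_mul _ (hPcomp _ _ hp₀')) h1
        (fun p hp => hPcomp _ _ hp)
    have hPm : ContinuousWithinAt (fun p : G × G => P (TG.mul p.1 p.2))
        {p : G × G | TG.comp p.1 p.2} p₀ := hPc.continuousAt.comp_continuousWithinAt hmcont
    have ev1 := hmcont.eventually (hBopen.eventually_mem hγ₀B)
    have ev2 := hPP.eventually (hWcopen.eventually_mem hEWc)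
    have ev3 := hPm.eventually (hWdopen.eventually_mem hPWd)
    have evσ : ∀ᶠ p : G × G in nhdsWithin p₀ {p : G × G | TG.comp p.1 p.2},
        ((σ p.1 p.2 : Rˣ) : R) = ((σ p₀.1 p₀.2 : Rˣ) : R) := by
      filter_upwards [self_mem_nhdsWithin, ev1, ev2, ev3] with p h0 h1 h2 h3
      rw [hclaim p h0 h1 h2 h3, hclaim p₀ hp₀' hγ₀B hEWc hPWd]
    exact ContinuousWithinAt.congr_of_eventuallyEq
      continuousWithinAt_const evσ rfl
  refine ⟨hPcomp, σ, ⟨hcont, hcoc, fun α β h => hσ α β h⟩, hnorm, ?_⟩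
  rintro σ' ⟨-, -, hind⟩ α β hab
  have h1 := hind α β hab
  have h2 := hσ α β hab
  exact (hTw.i_injective _ (hrmem α) _ (hrmem α) _ _ (h1.symm.trans h2)).2
end TwistedSteinberg
end
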